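/- arXiv:1403.4586 — 6 statements merged into one kernel-verified Lean document; each statement's English description precedes it below -/
import Mathlib

section
/- Let G be a profinite group and let ρ: G → U_4(F_p) be a continuous surjective group homomorphism. Let χ_1 = ρ_{12}, χ_2 = ρ_{23}, χ_3 = ρ_{34} be the compositions of ρ with the coordinate projections at positions (1,2), (2,3), (3,4), which are group homomorphisms G → F_p. Then χ_1, χ_2, χ_3 are F_p-linearly independent elements of H^1(G, F_p), and the cup products χ_1 ∪ χ_2 and χ_2 ∪ χ_3 both vanish in H^2(G, F_p). -/
open Matrix

/-- An upper-triangular unipotent matrix: zero entries below the diagonal and ones on it. -/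
def IsUpperUnitriangular {n : ℕ} {p : ℕ} (M : Matrix (Fin n) (Fin n) (ZMod p)) : Prop :=
  (∀ i j : Fin n, (j : ℕ) < (i : ℕ) → M i j = 0) ∧ ∀ i, M i i = 1

/-! For upper unitriangular matrices, `(A * B) i k = A i k + B i k + ∑_{i < j < k} A i j * B j k`.
On the superdiagonal the sum is empty, so each `χᵢ = ρ_{i,i+1}` is a homomorphism; two steps
above the diagonal it is the single term `χᵢ(g) χᵢ₊₁(h)`, so the cochain `-ρ_{i,i+2}` has
coboundary `χᵢ ∪ χᵢ₊₁`. Linear independence holds because, by surjectivity, every transvection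
`1 + E_{i,i+1}` is a value of `ρ`, and the `χ`'s take the values `0` and `1` there. -/

open Finset in
theorem IsUpperUnitriangular.mul_apply_of_lt {n p : ℕ} {A B : Matrix (Fin n) (Fin n) (ZMod p)}
    (hA : IsUpperUnitriangular A) (hB : IsUpperUnitriangular B) {i j : Fin n} (hij : i < j) :
    (A * B) i j = A i j + B i j + ∑ k ∈ Ioo i j, A i k * B k j := by
  have outside : ∀ k ∉ Icc i j, A i k * B k j = 0 := by
    intro k hk
    rcases not_and_or.mp (mem_Icc.not.mp hk) with hk | hk
    · rw [hA.1 i k (not_le.mp hk), zero_mul]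
    · rw [hB.1 k j (not_le.mp hk), mul_zero]
  rw [mul_apply, ← sum_subset (subset_univ _) fun k _ hk => outside k hk,
    ← Ioc_insert_left hij.le, sum_insert (by simp), ← Ioo_insert_right hij,
    sum_insert (by simp), hA.2, hB.2]
  ring

theorem IsUpperUnitriangular.mul_apply_of_covBy {n p : ℕ} {A B : Matrix (Fin n) (Fin n) (ZMod p)}
    (hA : IsUpperUnitriangular A) (hB : IsUpperUnitriangular B) {i j : Fin n} (hij : i ⋖ j) :
    (A * B) i j = A i j + B i j := by
  have empty : Finset.Ioo i j = ∅ := Finset.coe_eq_empty.mp (by simpa using hij.Ioo_eq)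
  rw [hA.mul_apply_of_lt hB hij.lt, empty, Finset.sum_empty, add_zero]

theorem IsUpperUnitriangular.mul_apply_of_Ioo_eq_singleton {n p : ℕ}
    {A B : Matrix (Fin n) (Fin n) (ZMod p)} (hA : IsUpperUnitriangular A)
    (hB : IsUpperUnitriangular B) {i j k : Fin n} (hijk : Finset.Ioo i k = {j}) :
    (A * B) i k = A i k + B i k + A i j * B j k := by
  have hik : i < k := by
    obtain ⟨hij, hjk⟩ := Finset.mem_Ioo.mp (hijk ▸ Finset.mem_singleton_self j)
    exact hij.trans hjk
  rw [hA.mul_apply_of_lt hB hik, hijk, Finset.sum_singleton]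

theorem map_mul_apply_of_covBy {n p : ℕ} {G : Type*} [Group G]
    (F : G →* Matrix (Fin n) (Fin n) (ZMod p)) (hF : ∀ g, IsUpperUnitriangular (F g))
    {i j : Fin n} (hij : i ⋖ j) (g h : G) : F (g * h) i j = F g i j + F h i j := by
  rw [map_mul, (hF g).mul_apply_of_covBy (hF h) hij]

theorem exists_continuous_coboundary_eq_mul_apply {n p : ℕ} {G : Type*} [Group G]
    [TopologicalSpace G] (F : G →* Matrix (Fin n) (Fin n) (ZMod p)) (hFc : Continuous F)
    (hF : ∀ g, IsUpperUnitriangular (F g)) {i j k : Fin n} (hijk : Finset.Ioo i k = {j}) :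
    ∃ c : G → ZMod p, Continuous c ∧ ∀ g h, F g i j * F h j k = c h - c (g * h) + c g := by
  refine ⟨fun g => -F g i k, (hFc.matrix_elem i k).neg, fun g h => ?_⟩
  beta_reduce
  rw [map_mul, (hF g).mul_apply_of_Ioo_eq_singleton (hF h) hijk]
  ring

theorem isUpperUnitriangular_transvection {n p : ℕ} {i j : Fin n} (hij : i < j) :
    IsUpperUnitriangular (transvection i j (1 : ZMod p)) := by
  refine ⟨fun a b hba => ?_, fun a => ?_⟩
  · have hab : a ≠ b := fun h => (h ▸ hba).false
    have : ¬(i = a ∧ j = b) := by rintro ⟨rfl, rfl⟩; exact hij.asymm hba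
    simp [transvection, hab, this]
  · simp only [transvection, Matrix.add_apply, one_apply_eq, single_apply, add_eq_left,
      ite_eq_right_iff, and_imp]
    rintro rfl rfl
    exact (lt_irrefl _ hij).elim

theorem exists_coe_eq_transvection {n p : ℕ} {U : Subgroup (GL (Fin n) (ZMod p))}
    (hU : ∀ g : GL (Fin n) (ZMod p), IsUpperUnitriangular (g : Matrix (Fin n) (Fin n) (ZMod p)) →
      g ∈ U) {i j : Fin n} (hij : i < j) :
    ∃ u : U, ((u : GL (Fin n) (ZMod p)) : Matrix (Fin n) (Fin n) (ZMod p)) =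
      transvection i j 1 := by
  let t : GL (Fin n) (ZMod p) := nonsingInvUnit (transvection i j 1)
    (by rw [det_transvection_of_ne _ _ hij.ne]; exact isUnit_one)
  exact ⟨⟨t, hU t (isUpperUnitriangular_transvection hij)⟩, rfl⟩

theorem surjection_to_U4_gives_lin_indep_chars_with_vanishing_cups_general
    (p : ℕ)
    (G : Type*) [Group G] [TopologicalSpace G]
    (U4 : Subgroup (Matrix.GeneralLinearGroup (Fin 4) (ZMod p)))
    (hU4 : ∀ g : Matrix.GeneralLinearGroup (Fin 4) (ZMod p),
      g ∈ U4 ↔ IsUpperUnitriangular (g : Matrix (Fin 4) (Fin 4) (ZMod p)))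
    (ρ : G →* U4) (hρcont : Continuous ρ) (hρsurj : Function.Surjective ρ) :
    (∀ i : Fin 3,
      -- each χᵢ is a continuous group homomorphism, i.e. an element of H¹(G, F_p)
      Continuous (fun g : G =>
        ((ρ g : Matrix.GeneralLinearGroup (Fin 4) (ZMod p)) : Matrix (Fin 4) (Fin 4) (ZMod p))
          i.castSucc i.succ) ∧
      (∀ g h : G,
        ((ρ (g * h) : Matrix.GeneralLinearGroup (Fin 4) (ZMod p)) : Matrix (Fin 4) (Fin 4) (ZMod p))
          i.castSucc i.succ
        = ((ρ g : Matrix.GeneralLinearGroup (Fin 4) (ZMod p)) : Matrix (Fin 4) (Fin 4) (ZMod p))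
            i.castSucc i.succ
          + ((ρ h : Matrix.GeneralLinearGroup (Fin 4) (ZMod p)) : Matrix (Fin 4) (Fin 4) (ZMod p))
              i.castSucc i.succ)) ∧
    -- χ₁, χ₂, χ₃ are F_p-linearly independent in H¹(G, F_p)
    (∀ x y z : ZMod p,
      (∀ g : G,
        x * ((ρ g : Matrix.GeneralLinearGroup (Fin 4) (ZMod p)) : Matrix (Fin 4) (Fin 4) (ZMod p)) 0 1
        + y * ((ρ g : Matrix.GeneralLinearGroup (Fin 4) (ZMod p)) : Matrix (Fin 4) (Fin 4) (ZMod p)) 1 2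
        + z * ((ρ g : Matrix.GeneralLinearGroup (Fin 4) (ZMod p)) : Matrix (Fin 4) (Fin 4) (ZMod p)) 2 3
        = 0) → x = 0 ∧ y = 0 ∧ z = 0) ∧
    -- χ₁ ∪ χ₂ = 0 in H²(G, F_p)
    (∃ c : G → ZMod p, Continuous c ∧ ∀ g h : G,
      ((ρ g : Matrix.GeneralLinearGroup (Fin 4) (ZMod p)) : Matrix (Fin 4) (Fin 4) (ZMod p)) 0 1
        * ((ρ h : Matrix.GeneralLinearGroup (Fin 4) (ZMod p)) : Matrix (Fin 4) (Fin 4) (ZMod p)) 1 2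
      = c h - c (g * h) + c g) ∧
    -- χ₂ ∪ χ₃ = 0 in H²(G, F_p)
    (∃ c : G → ZMod p, Continuous c ∧ ∀ g h : G,
      ((ρ g : Matrix.GeneralLinearGroup (Fin 4) (ZMod p)) : Matrix (Fin 4) (Fin 4) (ZMod p)) 1 2
        * ((ρ h : Matrix.GeneralLinearGroup (Fin 4) (ZMod p)) : Matrix (Fin 4) (Fin 4) (ZMod p)) 2 3
      = c h - c (g * h) + c g) := by
  let F : G →* Matrix (Fin 4) (Fin 4) (ZMod p) := (Units.coeHom _).comp (U4.subtype.comp ρ)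
  have hFc : Continuous F := Units.continuous_val.comp (continuous_subtype_val.comp hρcont)
  have hF : ∀ g, IsUpperUnitriangular (F g) := fun g => (hU4 _).mp (ρ g).2
  have transvection_mem_range : ∀ {i j : Fin 4}, i < j →
      ∃ g : G, ((ρ g : GL (Fin 4) (ZMod p)) : Matrix (Fin 4) (Fin 4) (ZMod p)) =
        transvection i j 1 := by
    intro i j hij
    obtain ⟨u, hu⟩ := exists_coe_eq_transvection (fun g => (hU4 g).mpr) hij
    obtain ⟨g, rfl⟩ := hρsurj u
    exact ⟨g, hu⟩
  refine ⟨fun i => ⟨hFc.matrix_elem _ _, map_mul_apply_of_covBy F hF ?_⟩, fun x y z hxyz => ?_,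
    exists_continuous_coboundary_eq_mul_apply F hFc hF (by decide),
    exists_continuous_coboundary_eq_mul_apply F hFc hF (by decide)⟩
  · exact Fin.covBy_iff.mpr (Order.covBy_add_one _)
  · obtain ⟨g₁, hg₁⟩ := transvection_mem_range (show (0 : Fin 4) < 1 by decide)
    obtain ⟨g₂, hg₂⟩ := transvection_mem_range (show (1 : Fin 4) < 2 by decide)
    obtain ⟨g₃, hg₃⟩ := transvection_mem_range (show (2 : Fin 4) < 3 by decide)
    refine ⟨?_, ?_, ?_⟩
    · simpa [hg₁, transvection, single_apply] using hxyz g₁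
    · simpa [hg₂, transvection, single_apply] using hxyz g₂
    · simpa [hg₃, transvection, single_apply] using hxyz g₃

/-- **Remark (Section 4).**  Let `G` be a profinite group and
`ρ : G → U₄(F_p)` a continuous surjective homomorphism (here `U4` is the subgroup of
`GL₄(F_p)` consisting of the upper-triangular unipotent matrices).  Let
`χ₁ = ρ₁₂`, `χ₂ = ρ₂₃`, `χ₃ = ρ₃₄` be the compositions of `ρ` with the coordinate
projections at the positions `(1,2)`, `(2,3)`, `(3,4)`.  Then the `χ`'s are continuous
group homomorphisms `G → F_p`, i.e. elements of `H¹(G, F_p)`, they are `F_p`-linearly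
independent, and the cup products `χ₁ ∪ χ₂` and `χ₂ ∪ χ₃` vanish in `H²(G, F_p)`
(i.e. the 2-cocycles `(g,h) ↦ χᵢ g * χⱼ h` are coboundaries of continuous 1-cochains). -/
theorem surjection_to_U4_gives_lin_indep_chars_with_vanishing_cups
    (p : ℕ) [Fact p.Prime]
    (G : Type*) [Group G] [TopologicalSpace G] [IsTopologicalGroup G]
    [CompactSpace G] [TotallyDisconnectedSpace G] [T2Space G]
    (U4 : Subgroup (Matrix.GeneralLinearGroup (Fin 4) (ZMod p)))
    (hU4 : ∀ g : Matrix.GeneralLinearGroup (Fin 4) (ZMod p),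
      g ∈ U4 ↔ IsUpperUnitriangular (g : Matrix (Fin 4) (Fin 4) (ZMod p)))
    (ρ : G →* U4) (hρcont : Continuous ρ) (hρsurj : Function.Surjective ρ) :
    (∀ i : Fin 3,
      -- each χᵢ is a continuous group homomorphism, i.e. an element of H¹(G, F_p)
      Continuous (fun g : G =>
        ((ρ g : Matrix.GeneralLinearGroup (Fin 4) (ZMod p)) : Matrix (Fin 4) (Fin 4) (ZMod p))
          i.castSucc i.succ) ∧
      (∀ g h : G,
        ((ρ (g * h) : Matrix.GeneralLinearGroup (Fin 4) (ZMod p)) : Matrix (Fin 4) (Fin 4) (ZMod p))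
          i.castSucc i.succ
        = ((ρ g : Matrix.GeneralLinearGroup (Fin 4) (ZMod p)) : Matrix (Fin 4) (Fin 4) (ZMod p))
            i.castSucc i.succ
          + ((ρ h : Matrix.GeneralLinearGroup (Fin 4) (ZMod p)) : Matrix (Fin 4) (Fin 4) (ZMod p))
              i.castSucc i.succ)) ∧
    -- χ₁, χ₂, χ₃ are F_p-linearly independent in H¹(G, F_p)
    (∀ x y z : ZMod p,
      (∀ g : G,
        x * ((ρ g : Matrix.GeneralLinearGroup (Fin 4) (ZMod p)) : Matrix (Fin 4) (Fin 4) (ZMod p)) 0 1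
        + y * ((ρ g : Matrix.GeneralLinearGroup (Fin 4) (ZMod p)) : Matrix (Fin 4) (Fin 4) (ZMod p)) 1 2
        + z * ((ρ g : Matrix.GeneralLinearGroup (Fin 4) (ZMod p)) : Matrix (Fin 4) (Fin 4) (ZMod p)) 2 3
        = 0) → x = 0 ∧ y = 0 ∧ z = 0) ∧
    -- χ₁ ∪ χ₂ = 0 in H²(G, F_p)
    (∃ c : G → ZMod p, Continuous c ∧ ∀ g h : G,
      ((ρ g : Matrix.GeneralLinearGroup (Fin 4) (ZMod p)) : Matrix (Fin 4) (Fin 4) (ZMod p)) 0 1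
        * ((ρ h : Matrix.GeneralLinearGroup (Fin 4) (ZMod p)) : Matrix (Fin 4) (Fin 4) (ZMod p)) 1 2
      = c h - c (g * h) + c g) ∧
    -- χ₂ ∪ χ₃ = 0 in H²(G, F_p)
    (∃ c : G → ZMod p, Continuous c ∧ ∀ g h : G,
      ((ρ g : Matrix.GeneralLinearGroup (Fin 4) (ZMod p)) : Matrix (Fin 4) (Fin 4) (ZMod p)) 1 2
        * ((ρ h : Matrix.GeneralLinearGroup (Fin 4) (ZMod p)) : Matrix (Fin 4) (Fin 4) (ZMod p)) 2 3
      = c h - c (g * h) + c g) :=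
  surjection_to_U4_gives_lin_indep_chars_with_vanishing_cups_general p G U4 hU4 ρ hρcont hρsurj
end

section
/- Let G be a profinite group, p a prime, and n ≥ 3 an integer. The following are equivalent: (1) G has the vanishing n-fold Massey product property with respect to F_p, i.e., every defined n-fold Massey product ⟨a_1,…,a_n⟩ of elements a_1,…,a_n ∈ H^1(G, F_p) contains 0; (2) for every continuous homomorphism ρ̄: G → Ū_{n+1}(F_p), the continuous homomorphism (ρ̄_{12}, ρ̄_{23}, …, ρ̄_{n,n+1}): G → F_p^n lifts through the quotient map U_{n+1}(F_p) → F_p^n (sending a matrix to its superdiagonal entries) to a continuous homomorphism ρ: G → U_{n+1}(F_p). -/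
/-!
Dwyer's correspondence: a family of continuous 1-cochains `f i j` is the same thing as the map
`g ↦ 1 - (f i j g)` into upper unitriangular matrices, and by the product formula
`(M N)_{ij} = M_{ij} + N_{ij} + ∑_{i<l<j} M_{il} N_{lj}` this map is multiplicative at the entry
`(i, j)` exactly when `∂ f i j = ∑ f i l ∪ f l j`. Since `Z` consists of the matrices that differ
from `1` only in the corner `(1, n+1)`, a defining system of `⟨a 1, …, a n⟩` is a continuous
homomorphism `G → Ū` with superdiagonal `a`, seen through a set-theoretic lift to `U`; and a
defining system together with a cochain `c` with `∂ c` equal to its value is a homomorphism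
`G → U` with corner entry `-c`. Both implications follow: for (1) ⇒ (2) read a defining system off
a lift of `ρ̄` and turn a vanishing one into `ρ`; for (2) ⇒ (1) turn the defining system into
`ρ̄`, lift it, and read a defining system with vanishing value off the lift.
-/

open Matrix

/-- A defining system for the `n`-fold Massey product `⟨a 1, …, a n⟩` in the DGA of
continuous inhomogeneous cochains of a topological group `G` with `F_p`-coefficients:
a family of continuous 1-cochains `f i j` (`1 ≤ i < j ≤ n+1`, `(i,j) ≠ (1,n+1)`) such
that `f i (i+1)` represents `a i` and `∂(f i j) = ∑_{i<l<j} f i l ∪ f l j` for `i+1 < j`,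
where `(∂u)(g,h) = u(h) − u(gh) + u(g)` and `(u ∪ v)(g,h) = u(g)·v(h)`. -/
def IsMasseyDefiningSystem (G : Type*) [Group G] [TopologicalSpace G] (p n : ℕ)
    (a : ℕ → G → ZMod p) (f : ℕ → ℕ → G → ZMod p) : Prop :=
  (∀ i j : ℕ, 1 ≤ i → i < j → j ≤ n + 1 → ¬(i = 1 ∧ j = n + 1) → Continuous (f i j)) ∧
  (∀ i : ℕ, 1 ≤ i → i ≤ n → f i (i + 1) = a i) ∧
  (∀ i j : ℕ, 1 ≤ i → i + 1 < j → j ≤ n + 1 → ¬(i = 1 ∧ j = n + 1) →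
    ∀ g h : G, f i j h - f i j (g * h) + f i j g = ∑ l ∈ Finset.Ioo i j, f i l g * f l j h)

/-- The `n`-fold Massey product `⟨a 1, …, a n⟩` is defined, i.e. admits a defining system. -/
def MasseyProductDefined (G : Type*) [Group G] [TopologicalSpace G] (p n : ℕ)
    (a : ℕ → G → ZMod p) : Prop :=
  ∃ f, IsMasseyDefiningSystem G p n a f

/-- The `n`-fold Massey product `⟨a 1, …, a n⟩` contains `0`: for some defining system the
value 2-cocycle `∑_{k=2}^{n} f 1 k ∪ f k (n+1)` is the coboundary of a continuous
1-cochain. -/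
def MasseyProductContainsZero (G : Type*) [Group G] [TopologicalSpace G] (p n : ℕ)
    (a : ℕ → G → ZMod p) : Prop :=
  ∃ f, IsMasseyDefiningSystem G p n a f ∧
    ∃ c : G → ZMod p, Continuous c ∧ ∀ g h : G,
      (∑ k ∈ Finset.Ioo 1 (n + 1), f 1 k g * f k (n + 1) h) = c h - c (g * h) + c g

/-- `G` has the vanishing `n`-fold Massey product property with respect to `F_p`: every
defined `n`-fold Massey product of elements of `H¹(G, F_p)` contains `0`. -/
def HasVanishingMasseyProduct (G : Type*) [Group G] [TopologicalSpace G]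
    (p n : ℕ) : Prop :=
  ∀ a : ℕ → G → ZMod p,
    (∀ i : ℕ, 1 ≤ i → i ≤ n → Continuous (a i) ∧
      ∀ g h : G, a i (g * h) = a i g + a i h) →
    MasseyProductDefined G p n a → MasseyProductContainsZero G p n a

open Finset

open Finset

namespace IsUpperUnitriangular

variable {p m : ℕ} {M N : Matrix (Fin m) (Fin m) (ZMod p)}

theorem apply_eq_of_not_lt (hM : IsUpperUnitriangular M) (hN : IsUpperUnitriangular N)
    {I J : Fin m} (h : ¬I < J) : M I J = N I J := by
  rcases (not_lt.mp h).lt_or_eq with h | rfl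
  · rw [hM.1 I J h, hN.1 I J h]
  · rw [hM.2, hN.2]

theorem mul (hM : IsUpperUnitriangular M) (hN : IsUpperUnitriangular N) :
    IsUpperUnitriangular (M * N) := by
  refine ⟨fun I J hJI => mul_apply.trans (Fintype.sum_eq_zero _ fun l => ?_), fun I => ?_⟩
  · rcases lt_or_ge l I with hl | hl
    · rw [hM.1 I l hl, zero_mul]
    · rw [hN.1 l J (lt_of_lt_of_le hJI hl), mul_zero]
  · rw [mul_apply, sum_eq_single I, hM.2, hN.2, one_mul]
    · intro l _ hlI
      rcases hlI.lt_or_gt with hl | hl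
      · rw [hM.1 I l hl, zero_mul]
      · rw [hN.1 l I hl, mul_zero]
    · simp

theorem mul_apply_of_lt_s8 (hM : IsUpperUnitriangular M) (hN : IsUpperUnitriangular N)
    {I J : Fin m} (h : I < J) :
    (M * N) I J = M I J + N I J + ∑ l ∈ Ioo I J, M I l * N l J := by
  have hout : ∀ l ∈ univ, l ∉ Icc I J → M I l * N l J = 0 := by
    intro l _ hl
    rcases not_and_or.mp (mem_Icc.not.mp hl) with hl | hl
    · rw [hM.1 I l (not_le.mp hl), zero_mul]
    · rw [hN.1 l J (not_le.mp hl), mul_zero]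
  rw [mul_apply, ← sum_subset (subset_univ _) hout, ← Ioc_insert_left h.le,
    sum_insert left_notMem_Ioc, ← Ioo_insert_right h, sum_insert right_notMem_Ioo,
    hM.2, hN.2, one_mul, mul_one]
  ring

theorem isUnit (hM : IsUpperUnitriangular M) : IsUnit M := by
  rw [isUnit_iff_isUnit_det, det_of_isUpperTriangular fun I J h => hM.1 I J h]
  simp [hM.2]

theorem mul_single_zero_last {n : ℕ} {M : Matrix (Fin (n + 1)) (Fin (n + 1)) (ZMod p)}
    (hM : IsUpperUnitriangular M) (t : ZMod p) :
    M * single 0 (Fin.last n) t = single 0 (Fin.last n) t := by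
  ext I J
  by_cases hJ : J = Fin.last n
  · subst hJ
    rcases eq_or_ne I 0 with rfl | hI
    · simp [hM.2]
    · simp [hM.1 I 0 (Fin.pos_of_ne_zero hI), single_apply_of_ne, hI.symm]
  · simp [hJ, Ne.symm hJ]

theorem single_zero_last_mul {n : ℕ} {M : Matrix (Fin (n + 1)) (Fin (n + 1)) (ZMod p)}
    (hM : IsUpperUnitriangular M) (t : ZMod p) :
    single (0 : Fin (n + 1)) (Fin.last n) t * M = single 0 (Fin.last n) t := by
  ext I J
  by_cases hI : I = 0
  · subst hI
    rcases eq_or_ne J (Fin.last n) with rfl | hJ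
    · simp [hM.2]
    · simp [hM.1 (Fin.last n) J (Fin.lt_last_iff_ne_last.mpr hJ), single_apply_of_ne, hJ.symm]
  · simp [hI, Ne.symm hI]

end IsUpperUnitriangular

theorem Matrix.exists_eq_add_smul_single_iff {m R : Type*} [DecidableEq m] [Ring R]
    {M N : Matrix m m R} (i j : m) :
    (∃ t : R, N = M + t • single i j 1) ↔ ∀ a b, ¬(a = i ∧ b = j) → N a b = M a b := by
  constructor
  · rintro ⟨t, rfl⟩ a b hab
    simp [single_apply_of_ne (h := fun h : i = a ∧ j = b => hab ⟨h.1.symm, h.2.symm⟩)]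
  · intro h
    refine ⟨N i j - M i j, ext fun a b => ?_⟩
    by_cases hab : a = i ∧ b = j
    · obtain ⟨rfl, rfl⟩ := hab
      simp
    · simp [single_apply_of_ne (h := fun h : i = a ∧ j = b => hab ⟨h.1.symm, h.2.symm⟩), h a b hab]

theorem Fin.sum_Ioo_val_add_one {m : ℕ} {M : Type*} [AddCommMonoid M] (I J : Fin m)
    (φ : ℕ → M) : ∑ l ∈ Ioo I J, φ (l + 1) = ∑ l ∈ Ioo ((I : ℕ) + 1) ((J : ℕ) + 1), φ l := by
  rw [← map_add_right_Ioo, ← Fin.map_valEmbedding_Ioo, sum_map, sum_map]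
  rfl

theorem Fin.not_castSucc_eq_zero_and_succ_eq_last {n : ℕ} (hn : 2 ≤ n) (k : Fin n) :
    ¬(k.castSucc = 0 ∧ k.succ = Fin.last n) := by
  rintro ⟨h0, hlast⟩
  have h0' := congrArg Fin.val h0
  have hlast' := congrArg Fin.val hlast
  simp only [Fin.val_castSucc, Fin.val_succ, Fin.val_last, Fin.val_zero] at h0' hlast'
  omega

section Cochains

variable {G : Type*} {p n : ℕ}

/-- Dwyer's matrix `1 - (f i j g)`, with the corner entry taken from `c`; matrix indices start
at `0`, cochain indices at `1`. -/
def cochainMatrix (n : ℕ) (f : ℕ → ℕ → G → ZMod p) (c : G → ZMod p) (g : G) :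
    Matrix (Fin (n + 1)) (Fin (n + 1)) (ZMod p) :=
  of fun I J => if I < J then -(if I = 0 ∧ J = Fin.last n then c g else f (I + 1) (J + 1) g)
    else if I = J then 1 else 0

/-- Inverse to `cochainMatrix` on `1 ≤ i < j ≤ n + 1`; indices outside that range are clamped. -/
def matrixCochains (σ : G → Matrix (Fin (n + 1)) (Fin (n + 1)) (ZMod p)) (i j : ℕ) (g : G) :
    ZMod p :=
  -σ g (Fin.clamp (i - 1) n) (Fin.clamp (j - 1) n)

/-- For `σ` into `U`, this says that `σ` followed by `U → U ⧸ Z` is a homomorphism. -/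
def MulOffCorner [Mul G] (σ : G → Matrix (Fin (n + 1)) (Fin (n + 1)) (ZMod p)) : Prop :=
  ∀ g h I J, ¬(I = 0 ∧ J = Fin.last n) → σ (g * h) I J = (σ g * σ h) I J

/-- The relations of a defining system, extended to `j = i + 1`, where they say that the
`f i (i + 1)` are homomorphisms. -/
def SatisfiesMasseyRelations [Mul G] (n : ℕ) (f : ℕ → ℕ → G → ZMod p) : Prop :=
  ∀ i j, 1 ≤ i → i < j → j ≤ n + 1 → ¬(i = 1 ∧ j = n + 1) → ∀ g h : G,
    f i j h - f i j (g * h) + f i j g = ∑ l ∈ Ioo i j, f i l g * f l j h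

variable {f : ℕ → ℕ → G → ZMod p} {c : G → ZMod p}

theorem SatisfiesMasseyRelations.map_mul_superdiag [Mul G] (hn : 2 ≤ n)
    (hrel : SatisfiesMasseyRelations n f) {i : ℕ} (hi : 1 ≤ i) (hin : i ≤ n) (g h : G) :
    f i (i + 1) (g * h) = f i (i + 1) g + f i (i + 1) h := by
  have := hrel i (i + 1) hi (by omega) (by omega) (by omega) g h
  rw [Ioo_add_one_right_eq_Ioc, Ioc_self, sum_empty] at this
  linear_combination -this

theorem isUpperUnitriangular_cochainMatrix (g : G) :
    IsUpperUnitriangular (cochainMatrix n f c g) := by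
  refine ⟨fun I J (h : J < I) => ?_, fun I => ?_⟩
  · simp [cochainMatrix, h.not_gt, h.ne']
  · simp [cochainMatrix]

theorem cochainMatrix_apply_of_lt {I J : Fin (n + 1)} (hIJ : I < J)
    (hcorner : ¬(I = 0 ∧ J = Fin.last n)) (g : G) :
    cochainMatrix n f c g I J = -f (I + 1) (J + 1) g := by
  simp [cochainMatrix, hIJ, hcorner]

theorem cochainMatrix_apply_zero_last (hn : 0 < n) (g : G) :
    cochainMatrix n f c g 0 (Fin.last n) = -c g := by
  simp [cochainMatrix, Fin.pos_iff_ne_zero, hn.ne']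

theorem cochainMatrix_apply_castSucc_succ (hn : 2 ≤ n) (k : Fin n) (g : G) :
    cochainMatrix n f c g k.castSucc k.succ = -f (k + 1) (k + 1 + 1) g := by
  rw [cochainMatrix_apply_of_lt Fin.castSucc_lt_succ
    (Fin.not_castSucc_eq_zero_and_succ_eq_last hn k)]
  simp

theorem cochainMatrix_mul_apply_of_lt {I J : Fin (n + 1)} (hIJ : I < J) (g h : G) :
    (cochainMatrix n f c g * cochainMatrix n f c h) I J =
      cochainMatrix n f c g I J + cochainMatrix n f c h I J
        + ∑ l ∈ Ioo ((I : ℕ) + 1) (J + 1), f (I + 1) l g * f l (J + 1) h := by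
  rw [(isUpperUnitriangular_cochainMatrix g).mul_apply_of_lt_s8
    (isUpperUnitriangular_cochainMatrix h) hIJ, ← Fin.sum_Ioo_val_add_one]
  congr 1
  refine sum_congr rfl fun l hl => ?_
  obtain ⟨hIl, hlJ⟩ := mem_Ioo.mp hl
  rw [cochainMatrix_apply_of_lt hIl, cochainMatrix_apply_of_lt hlJ, neg_mul_neg]
  · exact fun h => ((Fin.zero_le I).trans_lt hIl).ne' h.1
  · exact fun h => (hlJ.trans_le (Fin.le_last J)).ne h.2

theorem cochainMatrix_mul_apply_eq_iff [Mul G] {I J : Fin (n + 1)} (hIJ : I < J)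
    (hcorner : ¬(I = 0 ∧ J = Fin.last n)) (g h : G) :
    cochainMatrix n f c (g * h) I J = (cochainMatrix n f c g * cochainMatrix n f c h) I J ↔
      f (I + 1) (J + 1) h - f (I + 1) (J + 1) (g * h) + f (I + 1) (J + 1) g
        = ∑ l ∈ Ioo ((I : ℕ) + 1) (J + 1), f (I + 1) l g * f l (J + 1) h := by
  rw [cochainMatrix_mul_apply_of_lt hIJ, cochainMatrix_apply_of_lt hIJ hcorner,
    cochainMatrix_apply_of_lt hIJ hcorner, cochainMatrix_apply_of_lt hIJ hcorner]
  constructor <;> intro h <;> linear_combination h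

theorem cochainMatrix_mul_apply_zero_last_iff [Mul G] (hn : 0 < n) (g h : G) :
    cochainMatrix n f c (g * h) 0 (Fin.last n)
        = (cochainMatrix n f c g * cochainMatrix n f c h) 0 (Fin.last n) ↔
      ∑ l ∈ Ioo 1 (n + 1), f 1 l g * f l (n + 1) h = c h - c (g * h) + c g := by
  have hlast : (0 : Fin (n + 1)) < Fin.last n := Fin.lt_def.mpr (by simpa using hn)
  rw [cochainMatrix_mul_apply_of_lt hlast, cochainMatrix_apply_zero_last hn,
    cochainMatrix_apply_zero_last hn, cochainMatrix_apply_zero_last hn]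
  simp only [Fin.val_zero, Fin.val_last, zero_add]
  constructor <;> intro h <;> linear_combination -h

theorem mulOffCorner_cochainMatrix_iff [Mul G] :
    MulOffCorner (cochainMatrix n f c) ↔ SatisfiesMasseyRelations n f := by
  constructor
  · intro hmul i j hi hij hj hcorner g h
    obtain ⟨I, rfl⟩ : ∃ I : Fin (n + 1), i = I + 1 := ⟨⟨i - 1, by omega⟩, by simp; omega⟩
    obtain ⟨J, rfl⟩ : ∃ J : Fin (n + 1), j = J + 1 := ⟨⟨j - 1, by omega⟩, by simp; omega⟩
    have hcorner' : ¬(I = 0 ∧ J = Fin.last n) := fun ⟨h0, hl⟩ =>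
      hcorner ⟨by simp [h0], by simp [hl]⟩
    exact (cochainMatrix_mul_apply_eq_iff (Fin.lt_def.mpr (by omega)) hcorner' g h).mp
      (hmul g h I J hcorner')
  · intro hrel g h I J hcorner
    by_cases hIJ : I < J
    · refine (cochainMatrix_mul_apply_eq_iff hIJ hcorner g h).mpr
        (hrel _ _ (by omega) (by simpa using hIJ) (by omega) ?_ g h)
      exact fun ⟨h0, hl⟩ => hcorner ⟨Fin.ext (by simpa using h0), Fin.ext (by simpa using hl)⟩
    · exact (isUpperUnitriangular_cochainMatrix _).apply_eq_of_not_lt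
        ((isUpperUnitriangular_cochainMatrix g).mul (isUpperUnitriangular_cochainMatrix h)) hIJ

theorem cochainMatrix_mul [Mul G] (hn : 0 < n) (hmul : MulOffCorner (cochainMatrix n f c))
    (hc : ∀ g h, ∑ l ∈ Ioo 1 (n + 1), f 1 l g * f l (n + 1) h = c h - c (g * h) + c g) (g h : G) :
    cochainMatrix n f c (g * h) = cochainMatrix n f c g * cochainMatrix n f c h := by
  ext I J
  by_cases hcorner : I = 0 ∧ J = Fin.last n
  · obtain ⟨rfl, rfl⟩ := hcorner
    exact (cochainMatrix_mul_apply_zero_last_iff hn g h).mpr (hc g h)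
  · exact hmul g h I J hcorner

theorem cochainMatrix_matrixCochains {σ : G → Matrix (Fin (n + 1)) (Fin (n + 1)) (ZMod p)}
    (hσ : ∀ g, IsUpperUnitriangular (σ g)) :
    cochainMatrix n (matrixCochains σ) (matrixCochains σ 1 (n + 1)) = σ := by
  have hclamp : ∀ I : Fin (n + 1), Fin.clamp I n = I := fun I => by
    ext; simp [Nat.le_of_lt_succ I.isLt]
  funext g
  ext I J
  by_cases hIJ : I < J
  · by_cases hcorner : I = 0 ∧ J = Fin.last n
    · obtain ⟨rfl, rfl⟩ := hcorner
      have hlast : Fin.clamp n n = Fin.last n := by simpa using hclamp (Fin.last n)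
      have hzero : Fin.clamp 0 n = 0 := hclamp 0
      simp [cochainMatrix, matrixCochains, hIJ, hlast, hzero]
    · simp [cochainMatrix, matrixCochains, hIJ, hcorner, hclamp]
  · exact (isUpperUnitriangular_cochainMatrix g).apply_eq_of_not_lt (hσ g) hIJ

theorem continuous_cochainMatrix [TopologicalSpace G]
    (hf : ∀ i j, 1 ≤ i → i < j → j ≤ n + 1 → ¬(i = 1 ∧ j = n + 1) → Continuous (f i j))
    (hc : Continuous c) : Continuous (cochainMatrix n f c) := by
  refine continuous_matrix fun I J => ?_
  simp only [cochainMatrix, of_apply]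
  split_ifs with hIJ hcorner
  · exact hc.neg
  · refine (hf _ _ (by omega) (by simpa using hIJ) (by omega) ?_).neg
    exact fun ⟨h0, hl⟩ => hcorner ⟨Fin.ext (by simpa using h0), Fin.ext (by simpa using hl)⟩
  all_goals exact continuous_const

theorem continuous_matrixCochains [TopologicalSpace G]
    {σ : G → Matrix (Fin (n + 1)) (Fin (n + 1)) (ZMod p)} (hσ : Continuous σ) (i j : ℕ) :
    Continuous (matrixCochains σ i j) :=
  ((continuous_apply_apply _ _).comp hσ).neg

end Cochains

section DefiningSystems

variable {G : Type*} [Group G] [TopologicalSpace G] {p n : ℕ} {a : ℕ → G → ZMod p}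
  {f : ℕ → ℕ → G → ZMod p}

theorem IsMasseyDefiningSystem.satisfiesMasseyRelations (hf : IsMasseyDefiningSystem G p n a f)
    (ha : ∀ i, 1 ≤ i → i ≤ n → ∀ g h, a i (g * h) = a i g + a i h) :
    SatisfiesMasseyRelations n f := by
  intro i j hi hij hj hcorner g h
  rcases (show i + 1 ≤ j from hij).eq_or_lt with rfl | hij'
  · rw [hf.2.1 i hi (by omega), ha i hi (by omega), Ioo_add_one_right_eq_Ioc, Ioc_self, sum_empty]
    ring
  · exact hf.2.2 i j hi hij' hj hcorner g h

theorem SatisfiesMasseyRelations.isMasseyDefiningSystem (hrel : SatisfiesMasseyRelations n f)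
    (hcont : ∀ i j, 1 ≤ i → i < j → j ≤ n + 1 → ¬(i = 1 ∧ j = n + 1) → Continuous (f i j))
    (hfa : ∀ i, 1 ≤ i → i ≤ n → f i (i + 1) = a i) : IsMasseyDefiningSystem G p n a f :=
  ⟨hcont, hfa, fun i j hi hij hj => hrel i j hi (by omega) hj⟩

end DefiningSystems

section GLSubgroup

variable {m : ℕ} {R : Type*} [CommRing R]

def glMatrix (U : Subgroup (GL (Fin m) R)) : U →* Matrix (Fin m) (Fin m) R :=
  (Units.coeHom _).comp U.subtype

theorem glMatrix_injective (U : Subgroup (GL (Fin m) R)) : Function.Injective (glMatrix U) :=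
  fun _ _ h => Subtype.ext (Units.ext h)

theorem continuous_glMatrix_comp_iff [TopologicalSpace R] [DiscreteTopology R] {X : Type*}
    [TopologicalSpace X] {U : Subgroup (GL (Fin m) R)} {σ : X → U} :
    Continuous (glMatrix U ∘ σ) ↔ Continuous σ := by
  refine ⟨fun h => continuous_discrete_rng.mpr fun u => ?_,
    continuous_of_discreteTopology.comp⟩
  have : σ ⁻¹' {u} = (glMatrix U ∘ σ) ⁻¹' {glMatrix U u} := by
    ext x; simp [(glMatrix_injective U).eq_iff]
  exact this ▸ (isOpen_discrete _).preimage h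

end GLSubgroup

section UnitriangularGroup

variable {p n : ℕ}

theorem exists_glMatrix_eq {m : ℕ} {U : Subgroup (GL (Fin m) (ZMod p))}
    (hU : ∀ g : GL (Fin m) (ZMod p),
      IsUpperUnitriangular (g : Matrix (Fin m) (Fin m) (ZMod p)) → g ∈ U)
    {M : Matrix (Fin m) (Fin m) (ZMod p)} (hM : IsUpperUnitriangular M) :
    ∃ u : U, glMatrix U u = M :=
  ⟨⟨hM.isUnit.unit, hU _ hM⟩, rfl⟩

theorem exists_monoidHom_glMatrix_eq {m : ℕ} {G : Type*} [Group G]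
    {U : Subgroup (GL (Fin m) (ZMod p))}
    (hU : ∀ g : GL (Fin m) (ZMod p),
      IsUpperUnitriangular (g : Matrix (Fin m) (Fin m) (ZMod p)) → g ∈ U)
    {N : G → Matrix (Fin m) (Fin m) (ZMod p)} (hN : ∀ g, IsUpperUnitriangular (N g))
    (hmul : ∀ g h, N (g * h) = N g * N h) : ∃ ρ : G →* U, glMatrix U ∘ ρ = N := by
  choose σ hσ using fun g => exists_glMatrix_eq hU (hN g)
  refine ⟨MonoidHom.mk' σ fun g h => glMatrix_injective U ?_, funext hσ⟩
  rw [map_mul, hσ, hσ, hσ, hmul]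

variable {U : Subgroup (GL (Fin (n + 1)) (ZMod p))} {Z : Subgroup U}

theorem inv_mul_mem_iff_eq_off_corner
    (hZ : ∀ u : U, u ∈ Z ↔ ∃ t : ZMod p, glMatrix U u = 1 + t • single 0 (Fin.last n) 1)
    {u v : U} (hu : IsUpperUnitriangular (glMatrix U u)) :
    u⁻¹ * v ∈ Z ↔ ∀ I J, ¬(I = 0 ∧ J = Fin.last n) → glMatrix U v I J = glMatrix U u I J := by
  rw [hZ, ← exists_eq_add_smul_single_iff]
  refine exists_congr fun t => ?_
  change ((u : GL (Fin (n + 1)) (ZMod p))⁻¹ * v).val = _ ↔ _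
  rw [Units.val_mul, Units.inv_mul_eq_iff_eq_mul]
  change _ = glMatrix U u * _ ↔ _
  rw [mul_add, mul_one, Matrix.mul_smul, hu.mul_single_zero_last]
  rfl

theorem normal_of_mem_iff_corner (hU : ∀ u : U, IsUpperUnitriangular (glMatrix U u))
    (hZ : ∀ u : U, u ∈ Z ↔ ∃ t : ZMod p, glMatrix U u = 1 + t • single 0 (Fin.last n) 1) :
    Z.Normal := by
  refine ⟨fun z hz g => ?_⟩
  obtain ⟨t, ht⟩ := (hZ z).mp hz
  have hcomm : g * z = z * g := glMatrix_injective U <| by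
    rw [map_mul, map_mul, ht, mul_add, add_mul, mul_one, one_mul, Matrix.mul_smul,
      Matrix.smul_mul, (hU g).mul_single_zero_last, (hU g).single_zero_last_mul]
  rwa [hcomm, mul_inv_cancel_right]

theorem inv_mul_mem_iff_mulOffCorner {G : Type*} [Mul G]
    (hU : ∀ u : U, IsUpperUnitriangular (glMatrix U u))
    (hZ : ∀ u : U, u ∈ Z ↔ ∃ t : ZMod p, glMatrix U u = 1 + t • single 0 (Fin.last n) 1)
    {σ : G → U} : (∀ g h, (σ g * σ h)⁻¹ * σ (g * h) ∈ Z) ↔ MulOffCorner (glMatrix U ∘ σ) := by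
  simp only [inv_mul_mem_iff_eq_off_corner hZ (hU _), MulOffCorner, Function.comp_apply, map_mul]

end UnitriangularGroup

section EmbeddingProblems

variable {G : Type*} [Group G] [TopologicalSpace G] {p n : ℕ}
  {U : Subgroup (GL (Fin (n + 1)) (ZMod p))} {Z : Subgroup U}

theorem HasVanishingMasseyProduct.exists_lift (hn : 2 ≤ n)
    (hvan : HasVanishingMasseyProduct G p n)
    (hU : ∀ g : GL (Fin (n + 1)) (ZMod p),
      g ∈ U ↔ IsUpperUnitriangular (g : Matrix (Fin (n + 1)) (Fin (n + 1)) (ZMod p)))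
    (hZ : ∀ u : U, u ∈ Z ↔ ∃ t : ZMod p, glMatrix U u = 1 + t • single 0 (Fin.last n) 1)
    {Ubar : Type*} [Group Ubar] [TopologicalSpace Ubar] [DiscreteTopology Ubar] (q : U →* Ubar)
    (hq : Function.Surjective q) (hker : q.ker = Z) (ρbar : G →* Ubar) (hρbar : Continuous ρbar) :
    ∃ ρ : G →* U, Continuous ρ ∧ ∀ g u, q u = ρbar g → ∀ i : Fin n,
      glMatrix U (ρ g) i.castSucc i.succ = glMatrix U u i.castSucc i.succ := by
  have hUtri : ∀ u : U, IsUpperUnitriangular (glMatrix U u) := fun u => (hU u).mp u.2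
  choose s hs using hq
  set M := glMatrix U ∘ s ∘ ρbar
  have hMmul : MulOffCorner M := (inv_mul_mem_iff_mulOffCorner hUtri hZ).mp fun g h => by
    rw [← hker, MonoidHom.mem_ker]
    simp [hs]
  set f := matrixCochains M
  have hMf : cochainMatrix n f (f 1 (n + 1)) = M := cochainMatrix_matrixCochains fun g => hUtri _
  have hrel : SatisfiesMasseyRelations n f := mulOffCorner_cochainMatrix_iff.mp (hMf ▸ hMmul)
  have hfc : ∀ i j, Continuous (f i j) := continuous_matrixCochains
    (continuous_of_discreteTopology.comp (continuous_of_discreteTopology.comp hρbar))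
  have hsuper : ∀ i, 1 ≤ i → i ≤ n → ∀ g h, f i (i + 1) (g * h) = f i (i + 1) g + f i (i + 1) h :=
    fun i hi hin => hrel.map_mul_superdiag hn hi hin
  obtain ⟨f', hf', c, hc, hcorner⟩ := hvan (fun i => f i (i + 1))
    (fun i hi hin => ⟨hfc _ _, hsuper i hi hin⟩)
    ⟨f, hrel.isMasseyDefiningSystem (fun i j _ _ _ _ => hfc i j) fun _ _ _ => rfl⟩
  obtain ⟨ρ, hρ⟩ := exists_monoidHom_glMatrix_eq (fun g => (hU g).mpr)
    isUpperUnitriangular_cochainMatrix (cochainMatrix_mul (by omega)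
      (mulOffCorner_cochainMatrix_iff.mpr (hf'.satisfiesMasseyRelations hsuper)) hcorner)
  refine ⟨ρ, continuous_glMatrix_comp_iff.mp (hρ ▸ continuous_cochainMatrix hf'.1 hc),
    fun g u hu i => ?_⟩
  have hσu : (s (ρbar g))⁻¹ * u ∈ Z := by
    rw [← hker, MonoidHom.mem_ker]
    simp [hs, hu]
  calc glMatrix U (ρ g) i.castSucc i.succ = cochainMatrix n f' c g i.castSucc i.succ := by
        rw [← hρ]; rfl
    _ = M g i.castSucc i.succ := by
        rw [← hMf, cochainMatrix_apply_castSucc_succ hn, cochainMatrix_apply_castSucc_succ hn,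
          hf'.2.1 _ (by omega) (by omega)]
    _ = glMatrix U u i.castSucc i.succ :=
        ((inv_mul_mem_iff_eq_off_corner hZ (hUtri _)).mp hσu _ _
          (Fin.not_castSucc_eq_zero_and_succ_eq_last hn i)).symm

theorem hasVanishingMasseyProduct_of_exists_lift (hn : 2 ≤ n)
    (hU : ∀ g : GL (Fin (n + 1)) (ZMod p),
      g ∈ U ↔ IsUpperUnitriangular (g : Matrix (Fin (n + 1)) (Fin (n + 1)) (ZMod p)))
    (hZ : ∀ u : U, u ∈ Z ↔ ∃ t : ZMod p, glMatrix U u = 1 + t • single 0 (Fin.last n) 1)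
    [Z.Normal] (hlift : ∀ ρbar : G →* U ⧸ Z, Continuous ρbar → ∃ ρ : G →* U, Continuous ρ ∧
      ∀ g (u : U), (u : U ⧸ Z) = ρbar g → ∀ i : Fin n,
        glMatrix U (ρ g) i.castSucc i.succ = glMatrix U u i.castSucc i.succ) :
    HasVanishingMasseyProduct G p n := by
  rintro a ha ⟨f, hf⟩
  have hUtri : ∀ u : U, IsUpperUnitriangular (glMatrix U u) := fun u => (hU u).mp u.2
  have hrel : SatisfiesMasseyRelations n f :=
    hf.satisfiesMasseyRelations fun i hi hin => (ha i hi hin).2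
  choose σ hσ using fun g => exists_glMatrix_eq (fun g => (hU g).mpr)
    (isUpperUnitriangular_cochainMatrix (n := n) (f := f) (c := 0) g)
  have hσN : glMatrix U ∘ σ = cochainMatrix n f 0 := funext hσ
  have hσc : Continuous σ :=
    continuous_glMatrix_comp_iff.mp (hσN ▸ continuous_cochainMatrix hf.1 continuous_const)
  have hσZ := (inv_mul_mem_iff_mulOffCorner hUtri hZ).mpr
    (hσN ▸ mulOffCorner_cochainMatrix_iff.mpr hrel)
  let ρbar : G →* U ⧸ Z := MonoidHom.mk' (fun g => (σ g : U ⧸ Z)) fun g h => by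
    rw [← QuotientGroup.mk_mul, eq_comm, QuotientGroup.eq]
    exact hσZ g h
  obtain ⟨ρ, hρc, hρ⟩ := hlift ρbar (continuous_quotient_mk'.comp hσc)
  set M := glMatrix U ∘ ρ
  set f' := matrixCochains M
  have hMf : cochainMatrix n f' (f' 1 (n + 1)) = M := cochainMatrix_matrixCochains fun g => hUtri _
  have hMmul : ∀ g h, M (g * h) = M g * M h := fun g h => by simp [M]
  have hMoff : MulOffCorner M := fun g h I J _ => by rw [hMmul]
  have hrel' : SatisfiesMasseyRelations n f' := mulOffCorner_cochainMatrix_iff.mp (hMf ▸ hMoff)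
  have hfc : ∀ i j, Continuous (f' i j) :=
    continuous_matrixCochains (continuous_of_discreteTopology.comp hρc)
  have hsuper : ∀ i, 1 ≤ i → i ≤ n → f' i (i + 1) = a i := by
    intro i hi hin
    obtain ⟨k, rfl⟩ : ∃ k : Fin n, i = k + 1 := ⟨⟨i - 1, by omega⟩, by simp; omega⟩
    funext g
    rw [← hf.2.1 _ hi hin, ← neg_inj, ← cochainMatrix_apply_castSucc_succ (c := f' 1 (n + 1)) hn,
      ← cochainMatrix_apply_castSucc_succ (c := 0) hn, hMf, ← hσ]
    exact hρ g (σ g) rfl k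
  refine ⟨f', hrel'.isMasseyDefiningSystem (fun i j _ _ _ _ => hfc i j) hsuper, f' 1 (n + 1),
    hfc 1 (n + 1), fun g h => (cochainMatrix_mul_apply_zero_last_iff (by omega) g h).mp ?_⟩
  rw [hMf, hMmul]

end EmbeddingProblems

theorem vanishing_massey_iff_embedding_problems_solvable_general
    (p : ℕ) (n : ℕ) (hn : 3 ≤ n)
    (G : Type*) [Group G] [TopologicalSpace G]
    (U : Subgroup (Matrix.GeneralLinearGroup (Fin (n + 1)) (ZMod p)))
    (hU : ∀ g : Matrix.GeneralLinearGroup (Fin (n + 1)) (ZMod p),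
      g ∈ U ↔ IsUpperUnitriangular (g : Matrix (Fin (n + 1)) (Fin (n + 1)) (ZMod p)))
    (Z : Subgroup U)
    (hZ : ∀ g : U, g ∈ Z ↔ ∃ t : ZMod p,
      ((g : Matrix.GeneralLinearGroup (Fin (n + 1)) (ZMod p)) :
          Matrix (Fin (n + 1)) (Fin (n + 1)) (ZMod p))
        = 1 + t • Matrix.single 0 (Fin.last n) (1 : ZMod p)) :
    HasVanishingMasseyProduct G p n ↔
    (∀ (Ubar : Type) (_ : Group Ubar) (_ : TopologicalSpace Ubar)
        (_ : DiscreteTopology Ubar) (q : U →* Ubar),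
      Function.Surjective q → q.ker = Z →
      ∀ ρbar : G →* Ubar, Continuous ρbar →
        ∃ ρ : G →* U, Continuous ρ ∧
          ∀ g : G, ∀ u : U, q u = ρbar g → ∀ i : Fin n,
            ((ρ g : Matrix.GeneralLinearGroup (Fin (n + 1)) (ZMod p)) :
                Matrix (Fin (n + 1)) (Fin (n + 1)) (ZMod p)) i.castSucc i.succ
              = ((u : Matrix.GeneralLinearGroup (Fin (n + 1)) (ZMod p)) :
                  Matrix (Fin (n + 1)) (Fin (n + 1)) (ZMod p)) i.castSucc i.succ) := by
  refine ⟨fun hvan Ubar _ _ _ q hq hker ρbar hρbar =>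
    hvan.exists_lift (by omega) hU hZ q hq hker ρbar hρbar, fun hlift => ?_⟩
  have := normal_of_mem_iff_corner (fun u => (hU u).mp u.2) hZ
  refine hasVanishingMasseyProduct_of_exists_lift (by omega) hU hZ fun ρbar hρbar => ?_
  exact hlift (U ⧸ Z) _ _ (QuotientGroup.discreteTopology (isOpen_discrete _)) (QuotientGroup.mk' Z)
    (QuotientGroup.mk'_surjective Z) (QuotientGroup.ker_mk' Z) ρbar hρbar

/-- **Lemma 4.2.**  Let `G` be a profinite group, `p` a prime and `n ≥ 3`.  The following
are equivalent:
(1) `G` has the vanishing `n`-fold Massey product property with respect to `F_p`;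
(2) for every quotient model `q : U_{n+1}(F_p) → Ū_{n+1}(F_p) = U_{n+1}(F_p)/Z_{n+1}(F_p)`
(a surjection whose kernel is the subgroup `Z_{n+1}(F_p)` of matrices with all
off-diagonal entries `0` except possibly at the position `(1,n+1)`) and every continuous
homomorphism `ρ̄ : G → Ū_{n+1}(F_p)`, the continuous homomorphism
`(ρ̄₁₂, …, ρ̄_{n,n+1}) : G → F_pⁿ` lifts through the quotient map
`U_{n+1}(F_p) → F_pⁿ` (recording the superdiagonal entries) to a continuous homomorphism
`ρ : G → U_{n+1}(F_p)`, i.e. there is a continuous `ρ : G →* U_{n+1}(F_p)` whose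
superdiagonal entries agree with those of (any lift of) `ρ̄`. -/
theorem vanishing_massey_iff_embedding_problems_solvable
    (p : ℕ) [Fact p.Prime] (n : ℕ) (hn : 3 ≤ n)
    (G : Type*) [Group G] [TopologicalSpace G] [IsTopologicalGroup G]
    [CompactSpace G] [TotallyDisconnectedSpace G] [T2Space G]
    (U : Subgroup (Matrix.GeneralLinearGroup (Fin (n + 1)) (ZMod p)))
    (hU : ∀ g : Matrix.GeneralLinearGroup (Fin (n + 1)) (ZMod p),
      g ∈ U ↔ IsUpperUnitriangular (g : Matrix (Fin (n + 1)) (Fin (n + 1)) (ZMod p)))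
    (Z : Subgroup U)
    (hZ : ∀ g : U, g ∈ Z ↔ ∃ t : ZMod p,
      ((g : Matrix.GeneralLinearGroup (Fin (n + 1)) (ZMod p)) :
          Matrix (Fin (n + 1)) (Fin (n + 1)) (ZMod p))
        = 1 + t • Matrix.single 0 (Fin.last n) (1 : ZMod p)) :
    HasVanishingMasseyProduct G p n ↔
    (∀ (Ubar : Type) (_ : Group Ubar) (_ : TopologicalSpace Ubar)
        (_ : DiscreteTopology Ubar) (q : U →* Ubar),
      Function.Surjective q → q.ker = Z →
      ∀ ρbar : G →* Ubar, Continuous ρbar →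
        ∃ ρ : G →* U, Continuous ρ ∧
          ∀ g : G, ∀ u : U, q u = ρbar g → ∀ i : Fin n,
            ((ρ g : Matrix.GeneralLinearGroup (Fin (n + 1)) (ZMod p)) :
                Matrix (Fin (n + 1)) (Fin (n + 1)) (ZMod p)) i.castSucc i.succ
              = ((u : Matrix.GeneralLinearGroup (Fin (n + 1)) (ZMod p)) :
                  Matrix (Fin (n + 1)) (Fin (n + 1)) (ZMod p)) i.castSucc i.succ) :=
  vanishing_massey_iff_embedding_problems_solvable_general p n hn G U hU Z hZ
end

section
/- Let G be a profinite group and p a prime. Let χ_1, χ_2, χ_3 ∈ H^1(G, F_p) be F_p-linearly independent. Assume that G has the vanishing triple Massey product property with respect to F_p and that χ_1 ∪ χ_2 = χ_2 ∪ χ_3 = 0 in H^2(G, F_p). Then there is a continuous surjective homomorphism ρ: G → U_4(F_p) such that ρ_{12} = χ_1, ρ_{23} = χ_2 and ρ_{34} = χ_3. -/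
open Matrix

/-- A topological group `G` has the *vanishing triple Massey product property* with respect
to `F_p` if every defined triple Massey product `⟨χ₁,χ₂,χ₃⟩` of elements
`χ₁, χ₂, χ₃ ∈ H¹(G,F_p)` (continuous homomorphisms `G → F_p`) contains `0`.  Here a
defining system consists of continuous 1-cochains `a₁₃, a₂₄` with
`∂a₁₃ = χ₁ ∪ χ₂` and `∂a₂₄ = χ₂ ∪ χ₃` (where `(∂a)(g,h) = a(h) − a(gh) + a(g)` and
`(χ ∪ χ')(g,h) = χ(g)·χ'(h)`), and the value of the product relative to it is the class of
the 2-cocycle `χ₁ ∪ a₂₄ + a₁₃ ∪ χ₃`; the product contains `0` precisely when for some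
defining system this value is the coboundary of a continuous 1-cochain. -/
def HasVanishingTripleMasseyProduct (G : Type*) [Group G] [TopologicalSpace G]
    (p : ℕ) : Prop :=
  ∀ χ₁ χ₂ χ₃ : G → ZMod p,
    (Continuous χ₁ ∧ ∀ g h : G, χ₁ (g * h) = χ₁ g + χ₁ h) →
    (Continuous χ₂ ∧ ∀ g h : G, χ₂ (g * h) = χ₂ g + χ₂ h) →
    (Continuous χ₃ ∧ ∀ g h : G, χ₃ (g * h) = χ₃ g + χ₃ h) →
    -- if the triple Massey product ⟨χ₁,χ₂,χ₃⟩ is defined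
    (∃ a₁₃ a₂₄ : G → ZMod p, Continuous a₁₃ ∧ Continuous a₂₄ ∧
      (∀ g h : G, a₁₃ h - a₁₃ (g * h) + a₁₃ g = χ₁ g * χ₂ h) ∧
      (∀ g h : G, a₂₄ h - a₂₄ (g * h) + a₂₄ g = χ₂ g * χ₃ h)) →
    -- then it contains 0
    ∃ a₁₃ a₂₄ c : G → ZMod p, Continuous a₁₃ ∧ Continuous a₂₄ ∧ Continuous c ∧
      (∀ g h : G, a₁₃ h - a₁₃ (g * h) + a₁₃ g = χ₁ g * χ₂ h) ∧
      (∀ g h : G, a₂₄ h - a₂₄ (g * h) + a₂₄ g = χ₂ g * χ₃ h) ∧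
      (∀ g h : G, χ₁ g * a₂₄ h + a₁₃ g * χ₃ h = c h - c (g * h) + c g)


/-!
A defining system `(a₁₃, a₂₄)` for `⟨χ₁, χ₂, χ₃⟩` together with a cochain `c` with
`∂c = χ₁ ∪ a₂₄ + a₁₃ ∪ χ₃` is exactly what is needed for
`g ↦ [[1, χ₁, -a₁₃, c], [0, 1, χ₂, -a₂₄], [0, 0, 1, χ₃], [0, 0, 0, 1]]` to be a homomorphism
`G → U₄(F_p)`. Its composite with the superdiagonal `U₄(F_p) → F_p³` is additive, so by linear
independence it is onto. A subgroup of `U₄(F_p)` with this property is everything (Burnside's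
basis theorem, made explicit): commutators of lifts of the basis vectors produce the second
diagonal and the corner, and these in turn let one correct any lift.
-/

section Unitriangular4

variable {R : Type*} [CommRing R]

def unitriangular4 (a b c d e f : R) : Matrix (Fin 4) (Fin 4) R :=
  !![1, a, d, f; 0, 1, b, e; 0, 0, 1, c; 0, 0, 0, 1]

theorem unitriangular4_mul (a b c d e f a' b' c' d' e' f' : R) :
    unitriangular4 a b c d e f * unitriangular4 a' b' c' d' e' f' =
      unitriangular4 (a + a') (b + b') (c + c') (d + d' + a * b') (e + e' + b * c')
        (f + f' + a * e' + d * c') := by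
  ext i j
  fin_cases i <;> fin_cases j <;>
    simp [unitriangular4, Matrix.mul_apply, Fin.sum_univ_four] <;> ring

theorem unitriangular4_zero : unitriangular4 (0 : R) 0 0 0 0 0 = 1 := by
  ext i j
  fin_cases i <;> fin_cases j <;> simp [unitriangular4]

theorem unitriangular4_mul_inv (a b c d e f : R) :
    unitriangular4 a b c d e f * unitriangular4 (-a) (-b) (-c) (a * b - d) (b * c - e)
      (a * e + d * c - a * b * c - f) = 1 := by
  rw [unitriangular4_mul, ← unitriangular4_zero]
  congr 1 <;> ring

/-- The three conditions say that the strictly upper triangular part squares to zero. -/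
theorem unitriangular4_pow {a b c d e f : R} (hab : a * b = 0) (hbc : b * c = 0)
    (hae : a * e + d * c = 0) (k : ℕ) :
    unitriangular4 a b c d e f ^ k =
      unitriangular4 (k * a) (k * b) (k * c) (k * d) (k * e) (k * f) := by
  induction k with
  | zero => simp [unitriangular4_zero]
  | succ k ih =>
    rw [pow_succ, ih, unitriangular4_mul]
    push_cast
    congr 1
    · ring
    · ring
    · ring
    · linear_combination k * hab
    · linear_combination k * hbc
    · linear_combination k * hae

theorem Continuous.unitriangular4 {X : Type*} [TopologicalSpace X] [TopologicalSpace R]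
    {a b c d e f : X → R} (ha : Continuous a) (hb : Continuous b) (hc : Continuous c)
    (hd : Continuous d) (he : Continuous e) (hf : Continuous f) :
    Continuous fun x => _root_.unitriangular4 (a x) (b x) (c x) (d x) (e x) (f x) := by
  refine continuous_matrix fun i j => ?_
  fin_cases i <;> fin_cases j <;> simp [_root_.unitriangular4] <;> fun_prop

end Unitriangular4

theorem isUpperUnitriangular_unitriangular4 {p : ℕ} (a b c d e f : ZMod p) :
    IsUpperUnitriangular (unitriangular4 a b c d e f) := by
  refine ⟨fun i j hij => ?_, fun i => ?_⟩
  · fin_cases i <;> fin_cases j <;> simp_all [unitriangular4]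
  · fin_cases i <;> simp [unitriangular4]

theorem IsUpperUnitriangular.eq_unitriangular4 {p : ℕ} {M : Matrix (Fin 4) (Fin 4) (ZMod p)}
    (hM : IsUpperUnitriangular M) :
    M = unitriangular4 (M 0 1) (M 1 2) (M 2 3) (M 0 2) (M 1 3) (M 0 3) := by
  ext i j
  fin_cases i <;> fin_cases j <;> simp [unitriangular4] <;>
    first
      | exact hM.2 _
      | exact hM.1 _ _ (by decide)

section Generation

variable {G : Type*} [Group G]

section CommRing

variable {R : Type*} [CommRing R] (φ : G →* Matrix (Fin 4) (Fin 4) R)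

theorem unitriangular4_inv_mem_mrange {a b c d e f : R}
    (h : unitriangular4 a b c d e f ∈ MonoidHom.mrange φ) :
    unitriangular4 (-a) (-b) (-c) (a * b - d) (b * c - e) (a * e + d * c - a * b * c - f) ∈
      MonoidHom.mrange φ := by
  obtain ⟨g, hg⟩ := h
  refine ⟨g⁻¹, left_inv_eq_right_inv ?_ (unitriangular4_mul_inv a b c d e f)⟩
  rw [← hg, ← map_mul, inv_mul_cancel, map_one]

theorem unitriangular4_mem_mrange_of_derived_mem
    (hderived : ∀ x y z : R, unitriangular4 0 0 0 x y z ∈ MonoidHom.mrange φ) {a b c d e f : R}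
    (h : unitriangular4 a b c d e f ∈ MonoidHom.mrange φ) (d' e' f' : R) :
    unitriangular4 a b c d' e' f' ∈ MonoidHom.mrange φ := by
  convert mul_mem h (hderived (d' - d) (e' - e) (f' - f - a * (e' - e))) using 1
  rw [unitriangular4_mul]
  congr 1 <;> ring

end CommRing

variable {n : ℕ} [NeZero n] (φ : G →* Matrix (Fin 4) (Fin 4) (ZMod n))

theorem unitriangular4_smul_mem_mrange {a b c d e f : ZMod n} (hab : a * b = 0) (hbc : b * c = 0)
    (hae : a * e + d * c = 0) (h : unitriangular4 a b c d e f ∈ MonoidHom.mrange φ) (s : ZMod n) :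
    unitriangular4 (s * a) (s * b) (s * c) (s * d) (s * e) (s * f) ∈ MonoidHom.mrange φ := by
  have := pow_mem h s.val
  rwa [unitriangular4_pow hab hbc hae, ZMod.natCast_zmod_val] at this

variable {d₁ e₁ f₁ d₂ e₂ f₂ d₃ e₃ f₃ : ZMod n}

theorem unitriangular4_derived_mem_mrange
    (hx : unitriangular4 1 0 0 d₁ e₁ f₁ ∈ MonoidHom.mrange φ)
    (hy : unitriangular4 0 1 0 d₂ e₂ f₂ ∈ MonoidHom.mrange φ)
    (hz : unitriangular4 0 0 1 d₃ e₃ f₃ ∈ MonoidHom.mrange φ) (d e f : ZMod n) :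
    unitriangular4 0 0 0 d e f ∈ MonoidHom.mrange φ := by
  have hx' := unitriangular4_inv_mem_mrange φ hx
  have hy' := unitriangular4_inv_mem_mrange φ hy
  have hz' := unitriangular4_inv_mem_mrange φ hz
  have hu : unitriangular4 0 0 0 1 0 e₂ ∈ MonoidHom.mrange φ := by
    convert mul_mem (mul_mem (mul_mem hx hy) hx') hy' using 1
    simp only [unitriangular4_mul]
    congr 1 <;> ring
  have hv : unitriangular4 0 0 0 0 1 d₂ ∈ MonoidHom.mrange φ := by
    convert mul_mem (mul_mem (mul_mem hy hz) hy') hz' using 1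
    simp only [unitriangular4_mul]
    congr 1 <;> ring
  have hw : unitriangular4 0 0 0 0 0 1 ∈ MonoidHom.mrange φ := by
    convert mul_mem (mul_mem (mul_mem hx hv) hx') (unitriangular4_inv_mem_mrange φ hv) using 1
    simp only [unitriangular4_mul]
    congr 1 <;> ring
  have hcorner (s : ZMod n) : unitriangular4 0 0 0 0 0 s ∈ MonoidHom.mrange φ := by
    simpa using unitriangular4_smul_mem_mrange φ (by simp) (by simp) (by simp) hw s
  have hd (s : ZMod n) : unitriangular4 0 0 0 s 0 0 ∈ MonoidHom.mrange φ := by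
    have h₁ := mul_mem hu (hcorner (-e₂))
    rw [unitriangular4_mul] at h₁
    simpa using unitriangular4_smul_mem_mrange φ (by simp) (by simp) (by simp) h₁ s
  have he (s : ZMod n) : unitriangular4 0 0 0 0 s 0 ∈ MonoidHom.mrange φ := by
    have h₁ := mul_mem hv (hcorner (-d₂))
    rw [unitriangular4_mul] at h₁
    simpa using unitriangular4_smul_mem_mrange φ (by simp) (by simp) (by simp) h₁ s
  have hdef := mul_mem (mul_mem (hd d) (he e)) (hcorner f)
  rw [unitriangular4_mul, unitriangular4_mul] at hdef
  simpa using hdef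

theorem unitriangular4_mem_mrange
    (hx : unitriangular4 1 0 0 d₁ e₁ f₁ ∈ MonoidHom.mrange φ)
    (hy : unitriangular4 0 1 0 d₂ e₂ f₂ ∈ MonoidHom.mrange φ)
    (hz : unitriangular4 0 0 1 d₃ e₃ f₃ ∈ MonoidHom.mrange φ) (a b c d e f : ZMod n) :
    unitriangular4 a b c d e f ∈ MonoidHom.mrange φ := by
  have hlift {a b c d e f : ZMod n} (h : unitriangular4 a b c d e f ∈ MonoidHom.mrange φ) :=
    unitriangular4_mem_mrange_of_derived_mem φ (unitriangular4_derived_mem_mrange φ hx hy hz) h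
  have ha (s : ZMod n) : unitriangular4 s 0 0 0 0 0 ∈ MonoidHom.mrange φ := by
    simpa using unitriangular4_smul_mem_mrange φ (by simp) (by simp) (by simp) (hlift hx 0 0 0) s
  have hb (s : ZMod n) : unitriangular4 0 s 0 0 0 0 ∈ MonoidHom.mrange φ := by
    simpa using unitriangular4_smul_mem_mrange φ (by simp) (by simp) (by simp) (hlift hy 0 0 0) s
  have hc (s : ZMod n) : unitriangular4 0 0 s 0 0 0 ∈ MonoidHom.mrange φ := by
    simpa using unitriangular4_smul_mem_mrange φ (by simp) (by simp) (by simp) (hlift hz 0 0 0) s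
  have habc := mul_mem (mul_mem (ha a) (hb b)) (hc c)
  rw [unitriangular4_mul, unitriangular4_mul] at habc
  simpa using hlift habc d e f

end Generation

theorem AddSubgroup.eq_top_of_forall_sum_mul_eq_zero {p : ℕ} [Fact p.Prime] {ι : Type*}
    [Fintype ι] [DecidableEq ι] (W : AddSubgroup (ι → ZMod p))
    (hW : ∀ c : ι → ZMod p, (∀ v ∈ W, ∑ i, c i * v i = 0) → c = 0) : W = ⊤ := by
  suffices AddSubgroup.toZModSubmodule p W = ⊤ by
    simpa using congrArg Submodule.toAddSubgroup this
  rw [← Submodule.dualAnnihilator_eq_bot_iff, Submodule.eq_bot_iff]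
  intro ψ hψ
  have hc := hW (fun i => ψ fun j => if i = j then 1 else 0) fun v hv => by
    simp_rw [mul_comm _ (v _), ← smul_eq_mul, ← LinearMap.pi_apply_eq_sum_univ]
    exact (Submodule.mem_dualAnnihilator ψ).1 hψ v hv
  refine LinearMap.ext fun v => ?_
  simp [LinearMap.pi_apply_eq_sum_univ ψ v, congrFun hc]

theorem surjective_of_forall_sum_mul_eq_zero {p : ℕ} [Fact p.Prime] {ι : Type*} [Fintype ι]
    [DecidableEq ι] {G : Type*} [Group G] (L : G → ι → ZMod p)
    (hL : ∀ g h : G, L (g * h) = L g + L h)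
    (hindep : ∀ c : ι → ZMod p, (∀ g, ∑ i, c i * L g i = 0) → c = 0) :
    Function.Surjective L := by
  let L' : Additive G →+ ι → ZMod p := AddMonoidHom.mk' (fun g => L g.toMul) fun _ _ => hL _ _
  have hrange : L'.range = ⊤ :=
    L'.range.eq_top_of_forall_sum_mul_eq_zero fun c hc =>
      hindep c fun g => hc _ ⟨Additive.ofMul g, rfl⟩
  intro v
  obtain ⟨g, hg⟩ := AddMonoidHom.mem_range.1 (hrange ▸ AddSubgroup.mem_top v)
  exact ⟨g.toMul, hg⟩

theorem MonoidHom.continuous_toHomUnits {G M : Type*} [Group G] [TopologicalSpace G]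
    [ContinuousInv G] [Monoid M] [TopologicalSpace M] (f : G →* M) (hf : Continuous f) :
    Continuous f.toHomUnits :=
  Units.continuous_iff.2 ⟨hf, hf.comp continuous_inv⟩

section MasseyRep

variable {G : Type*} [Group G] {R : Type*} [CommRing R]

/-- The signs match the coboundary convention `(∂a)(g, h) = a h - a (g * h) + a g`. -/
def masseyRep (χ₁ χ₂ χ₃ A B C : G → R)
    (hm₁ : ∀ g h : G, χ₁ (g * h) = χ₁ g + χ₁ h)
    (hm₂ : ∀ g h : G, χ₂ (g * h) = χ₂ g + χ₂ h)
    (hm₃ : ∀ g h : G, χ₃ (g * h) = χ₃ g + χ₃ h)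
    (hA : ∀ g h : G, A h - A (g * h) + A g = χ₁ g * χ₂ h)
    (hB : ∀ g h : G, B h - B (g * h) + B g = χ₂ g * χ₃ h)
    (hC : ∀ g h : G, χ₁ g * B h + A g * χ₃ h = C h - C (g * h) + C g) :
    G →* Matrix (Fin 4) (Fin 4) R where
  toFun g := unitriangular4 (χ₁ g) (χ₂ g) (χ₃ g) (-A g) (-B g) (C g)
  map_one' := by
    have h₁ : χ₁ 1 = 0 := by simpa using hm₁ 1 1
    have h₂ : χ₂ 1 = 0 := by simpa using hm₂ 1 1
    have h₃ : χ₃ 1 = 0 := by simpa using hm₃ 1 1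
    have hA₁ : A 1 = 0 := by simpa [h₁] using hA 1 1
    have hB₁ : B 1 = 0 := by simpa [h₂] using hB 1 1
    have hC₁ : C 1 = 0 := by simpa [h₁, hA₁] using (hC 1 1).symm
    simp [h₁, h₂, h₃, hA₁, hB₁, hC₁, unitriangular4_zero]
  map_mul' g h := by
    rw [unitriangular4_mul]
    congr 1
    · exact hm₁ g h
    · exact hm₂ g h
    · exact hm₃ g h
    · linear_combination hA g h
    · linear_combination hB g h
    · linear_combination hC g h

theorem mem_mrange_masseyRep {p : ℕ} [Fact p.Prime] (χ₁ χ₂ χ₃ A B C : G → ZMod p)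
    (hm₁ : ∀ g h : G, χ₁ (g * h) = χ₁ g + χ₁ h)
    (hm₂ : ∀ g h : G, χ₂ (g * h) = χ₂ g + χ₂ h)
    (hm₃ : ∀ g h : G, χ₃ (g * h) = χ₃ g + χ₃ h)
    (hA : ∀ g h : G, A h - A (g * h) + A g = χ₁ g * χ₂ h)
    (hB : ∀ g h : G, B h - B (g * h) + B g = χ₂ g * χ₃ h)
    (hC : ∀ g h : G, χ₁ g * B h + A g * χ₃ h = C h - C (g * h) + C g)
    (hindep : ∀ x y z : ZMod p,
      (∀ g : G, x * χ₁ g + y * χ₂ g + z * χ₃ g = 0) → x = 0 ∧ y = 0 ∧ z = 0)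
    {M : Matrix (Fin 4) (Fin 4) (ZMod p)} (hM : IsUpperUnitriangular M) :
    M ∈ MonoidHom.mrange (masseyRep χ₁ χ₂ χ₃ A B C hm₁ hm₂ hm₃ hA hB hC) := by
  have hsurj : Function.Surjective fun g => ![χ₁ g, χ₂ g, χ₃ g] := by
    refine surjective_of_forall_sum_mul_eq_zero _ (fun g h => ?_) fun c hc => ?_
    · ext j
      fin_cases j <;> simp [hm₁, hm₂, hm₃]
    · obtain ⟨h₀, h₁, h₂⟩ := hindep (c 0) (c 1) (c 2) (by simpa [Fin.sum_univ_three] using hc)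
      ext j
      fin_cases j <;> assumption
  obtain ⟨g₁, hg₁⟩ := hsurj ![1, 0, 0]
  obtain ⟨g₂, hg₂⟩ := hsurj ![0, 1, 0]
  obtain ⟨g₃, hg₃⟩ := hsurj ![0, 0, 1]
  simp only [Matrix.vecCons_inj] at hg₁ hg₂ hg₃
  have hmem (g : G) : unitriangular4 (χ₁ g) (χ₂ g) (χ₃ g) (-A g) (-B g) (C g) ∈
      MonoidHom.mrange (masseyRep χ₁ χ₂ χ₃ A B C hm₁ hm₂ hm₃ hA hB hC) := ⟨g, rfl⟩
  have hx := hmem g₁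
  have hy := hmem g₂
  have hz := hmem g₃
  simp only [hg₁, hg₂, hg₃] at hx hy hz
  rw [hM.eq_unitriangular4]
  exact unitriangular4_mem_mrange _ hx hy hz _ _ _ _ _ _

end MasseyRep

theorem surjection_onto_U4_of_vanishing_triple_massey_general
    (p : ℕ) [Fact p.Prime]
    (G : Type*) [Group G] [TopologicalSpace G] [IsTopologicalGroup G]
    (U4 : Subgroup (Matrix.GeneralLinearGroup (Fin 4) (ZMod p)))
    (hU4 : ∀ g : Matrix.GeneralLinearGroup (Fin 4) (ZMod p),
      g ∈ U4 ↔ IsUpperUnitriangular (g : Matrix (Fin 4) (Fin 4) (ZMod p)))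
    (χ₁ χ₂ χ₃ : G → ZMod p)
    (h₁ : Continuous χ₁ ∧ ∀ g h : G, χ₁ (g * h) = χ₁ g + χ₁ h)
    (h₂ : Continuous χ₂ ∧ ∀ g h : G, χ₂ (g * h) = χ₂ g + χ₂ h)
    (h₃ : Continuous χ₃ ∧ ∀ g h : G, χ₃ (g * h) = χ₃ g + χ₃ h)
    (hindep : ∀ x y z : ZMod p,
      (∀ g : G, x * χ₁ g + y * χ₂ g + z * χ₃ g = 0) → x = 0 ∧ y = 0 ∧ z = 0)
    (hvanish : HasVanishingTripleMasseyProduct G p)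
    (hcup₁₂ : ∃ c : G → ZMod p, Continuous c ∧
      ∀ g h : G, χ₁ g * χ₂ h = c h - c (g * h) + c g)
    (hcup₂₃ : ∃ c : G → ZMod p, Continuous c ∧
      ∀ g h : G, χ₂ g * χ₃ h = c h - c (g * h) + c g) :
    ∃ ρ : G →* U4, Continuous ρ ∧ Function.Surjective ρ ∧
      ∀ g : G,
        ((ρ g : Matrix.GeneralLinearGroup (Fin 4) (ZMod p)) :
            Matrix (Fin 4) (Fin 4) (ZMod p)) 0 1 = χ₁ g ∧
        ((ρ g : Matrix.GeneralLinearGroup (Fin 4) (ZMod p)) :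
            Matrix (Fin 4) (Fin 4) (ZMod p)) 1 2 = χ₂ g ∧
        ((ρ g : Matrix.GeneralLinearGroup (Fin 4) (ZMod p)) :
            Matrix (Fin 4) (Fin 4) (ZMod p)) 2 3 = χ₃ g := by
  obtain ⟨hc₁, hm₁⟩ := h₁
  obtain ⟨hc₂, hm₂⟩ := h₂
  obtain ⟨hc₃, hm₃⟩ := h₃
  obtain ⟨a₁₃, ha₁₃, h₁₂⟩ := hcup₁₂
  obtain ⟨a₂₄, ha₂₄, h₂₃⟩ := hcup₂₃
  obtain ⟨A, B, C, hAc, hBc, hCc, hA, hB, hC⟩ :=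
    hvanish χ₁ χ₂ χ₃ ⟨hc₁, hm₁⟩ ⟨hc₂, hm₂⟩ ⟨hc₃, hm₃⟩
      ⟨a₁₃, a₂₄, ha₁₃, ha₂₄, fun g h => (h₁₂ g h).symm, fun g h => (h₂₃ g h).symm⟩
  let Φ := masseyRep χ₁ χ₂ χ₃ A B C hm₁ hm₂ hm₃ hA hB hC
  have hΦ : Continuous Φ := hc₁.unitriangular4 hc₂ hc₃ hAc.neg hBc.neg hCc
  have hΦU4 (g : G) : Φ.toHomUnits g ∈ U4 :=
    (hU4 _).2 (isUpperUnitriangular_unitriangular4 _ _ _ _ _ _)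
  refine ⟨Φ.toHomUnits.codRestrict U4 hΦU4,
    (Φ.continuous_toHomUnits hΦ).subtype_mk _, ?_, fun g => ⟨rfl, rfl, rfl⟩⟩
  rintro ⟨M, hM⟩
  obtain ⟨g, hg⟩ := mem_mrange_masseyRep χ₁ χ₂ χ₃ A B C hm₁ hm₂ hm₃ hA hB hC hindep ((hU4 M).1 hM)
  exact ⟨g, Subtype.ext (Units.ext hg)⟩

/-- **Corollary 4.4.**  Let `G` be a profinite group having the vanishing triple Massey
product property with respect to `F_p`, and let `χ₁, χ₂, χ₃ ∈ H¹(G, F_p)` be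
`F_p`-linearly independent with `χ₁ ∪ χ₂ = χ₂ ∪ χ₃ = 0` in `H²(G, F_p)`.  Then there is a
continuous surjective homomorphism `ρ : G → U₄(F_p)` with `ρ₁₂ = χ₁`, `ρ₂₃ = χ₂`,
`ρ₃₄ = χ₃`. -/
theorem surjection_onto_U4_of_vanishing_triple_massey
    (p : ℕ) [Fact p.Prime]
    (G : Type*) [Group G] [TopologicalSpace G] [IsTopologicalGroup G]
    [CompactSpace G] [TotallyDisconnectedSpace G] [T2Space G]
    (U4 : Subgroup (Matrix.GeneralLinearGroup (Fin 4) (ZMod p)))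
    (hU4 : ∀ g : Matrix.GeneralLinearGroup (Fin 4) (ZMod p),
      g ∈ U4 ↔ IsUpperUnitriangular (g : Matrix (Fin 4) (Fin 4) (ZMod p)))
    (χ₁ χ₂ χ₃ : G → ZMod p)
    (h₁ : Continuous χ₁ ∧ ∀ g h : G, χ₁ (g * h) = χ₁ g + χ₁ h)
    (h₂ : Continuous χ₂ ∧ ∀ g h : G, χ₂ (g * h) = χ₂ g + χ₂ h)
    (h₃ : Continuous χ₃ ∧ ∀ g h : G, χ₃ (g * h) = χ₃ g + χ₃ h)
    (hindep : ∀ x y z : ZMod p,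
      (∀ g : G, x * χ₁ g + y * χ₂ g + z * χ₃ g = 0) → x = 0 ∧ y = 0 ∧ z = 0)
    (hvanish : HasVanishingTripleMasseyProduct G p)
    (hcup₁₂ : ∃ c : G → ZMod p, Continuous c ∧
      ∀ g h : G, χ₁ g * χ₂ h = c h - c (g * h) + c g)
    (hcup₂₃ : ∃ c : G → ZMod p, Continuous c ∧
      ∀ g h : G, χ₂ g * χ₃ h = c h - c (g * h) + c g) :
    ∃ ρ : G →* U4, Continuous ρ ∧ Function.Surjective ρ ∧
      ∀ g : G,
        ((ρ g : Matrix.GeneralLinearGroup (Fin 4) (ZMod p)) :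
            Matrix (Fin 4) (Fin 4) (ZMod p)) 0 1 = χ₁ g ∧
        ((ρ g : Matrix.GeneralLinearGroup (Fin 4) (ZMod p)) :
            Matrix (Fin 4) (Fin 4) (ZMod p)) 1 2 = χ₂ g ∧
        ((ρ g : Matrix.GeneralLinearGroup (Fin 4) (ZMod p)) :
            Matrix (Fin 4) (Fin 4) (ZMod p)) 2 3 = χ₃ g :=
  surjection_onto_U4_of_vanishing_triple_massey_general p G U4 hU4 χ₁ χ₂ χ₃ h₁ h₂ h₃ hindep hvanish
    hcup₁₂ hcup₂₃
end

section
/- (Hoechsmann's lemma) Let ℰ be a finite weak embedding problem for a profinite group G, given by a continuous homomorphism α: G → Ū and a surjective homomorphism f: U → Ū of finite groups, with finite abelian kernel M = ker(f). Let ε ∈ H^2(Ū, M) be the cohomology class corresponding to the group extension 1 → M → U → Ū → 1 (where Ū acts on M via lifting and conjugation in U). Then ℰ has a weak solution if and only if α*(ε) = 0 in H^2(G, M). -/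
/-!
Fix the section `s`. A lift `β` of `α` and a `ker f`-valued cochain `c` determine each other
through `β g = (c g)⁻¹ * s (α g)`, and since `Ū` is discrete, `β` is continuous iff `c` is.
Expanding `β (g * h) = β g * β h` and moving the kernel elements `c g` and
`s (α g) * c h * s (α g)⁻¹` past each other (they commute because `ker f` is abelian) turns
multiplicativity of `β` into the coboundary equation `ε (α g, α h) = (∂c) (g, h)`.
-/

lemma Subgroup.commute_of_forall_mul_comm {U : Type*} [Group U] {N : Subgroup U}
    (hN : ∀ x y : N, x * y = y * x) {x y : U} (hx : x ∈ N) (hy : y ∈ N) : Commute x y :=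
  congrArg Subtype.val (hN ⟨x, hx⟩ ⟨y, hy⟩)

lemma mul_mul_inv_eq_iff_of_commute {U : Type*} [Group U] {a b ab c d cd : U}
    (h : Commute c (a * d * a⁻¹)) :
    a * b * ab⁻¹ = c * (a * d * a⁻¹) * cd⁻¹ ↔ cd⁻¹ * ab = c⁻¹ * a * (d⁻¹ * b) := by
  have key : (c * (a * d * a⁻¹))⁻¹ * (a * b) = c⁻¹ * a * (d⁻¹ * b) := by
    rw [h.eq]; group
  rw [← key, mul_inv_eq_iff_eq_mul, eq_inv_mul_iff_mul_eq, mul_assoc, eq_comm]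

lemma inv_mul_section_mul_iff_coboundary {G U Ubar : Type*} [Group G] [Group U] [Group Ubar]
    {f : U →* Ubar} (hM : ∀ x y : f.ker, x * y = y * x)
    (α : G →* Ubar) (s : Ubar → U) {c : G → U} (hc : ∀ g, c g ∈ f.ker) (g h : G) :
    (c (g * h))⁻¹ * s (α (g * h)) = (c g)⁻¹ * s (α g) * ((c h)⁻¹ * s (α h)) ↔
      s (α g) * s (α h) * (s (α g * α h))⁻¹
        = c g * (s (α g) * c h * (s (α g))⁻¹) * (c (g * h))⁻¹ := by
  have hconj : s (α g) * c h * (s (α g))⁻¹ ∈ f.ker := f.normal_ker.conj_mem _ (hc h) _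
  rw [mul_mul_inv_eq_iff_of_commute (Subgroup.commute_of_forall_mul_comm hM (hc g) hconj),
    map_mul]

theorem hoechsmann_lemma_general
    (G : Type*) [Group G] [TopologicalSpace G]
    (U : Type*) [Group U] [TopologicalSpace U] [DiscreteTopology U]
    (Ubar : Type*) [Group Ubar] [TopologicalSpace Ubar]
    [DiscreteTopology Ubar]
    (f : U →* Ubar)
    -- the kernel M = ker f is abelian
    (hM : ∀ x y : f.ker, x * y = y * x)
    (α : G →* Ubar) (hα : Continuous α)
    -- s is a set-theoretic section of f
    (s : Ubar → U) (hs : ∀ x : Ubar, f (s x) = x) :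
    -- ℰ has a weak solution iff α*(ε) = 0 in H²(G, M)
    (∃ β : G →* U, Continuous β ∧ f.comp β = α) ↔
    (∃ c : G → U, Continuous c ∧ (∀ g : G, c g ∈ f.ker) ∧
      ∀ g h : G,
        s (α g) * s (α h) * (s (α g * α h))⁻¹
          = c g * (s (α g) * c h * (s (α g))⁻¹) * (c (g * h))⁻¹) := by
  have hsα : Continuous (s ∘ α) := continuous_of_discreteTopology.comp hα
  constructor
  · rintro ⟨β, hβ, hfβ⟩
    have hβα : ∀ g, f (β g) = α g := DFunLike.congr_fun hfβ
    have hc : ∀ g, s (α g) * (β g)⁻¹ ∈ f.ker := by simp [hs, hβα]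
    have hβ_eq : ∀ g, (s (α g) * (β g)⁻¹)⁻¹ * s (α g) = β g := by simp
    refine ⟨fun g => s (α g) * (β g)⁻¹, hsα.mul hβ.inv, hc, fun g h => ?_⟩
    rw [← inv_mul_section_mul_iff_coboundary hM α s hc, hβ_eq, hβ_eq, hβ_eq, map_mul]
  · rintro ⟨c, hcont, hc, hcob⟩
    refine ⟨MonoidHom.mk' (fun g => (c g)⁻¹ * s (α g))
        (fun g h => (inv_mul_section_mul_iff_coboundary hM α s hc g h).2 (hcob g h)),
      hcont.inv.mul hsα, ?_⟩
    ext g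
    simp [hs, f.mem_ker.1 (hc g)]

/-- **Lemma 4.3 (Hoechsmann's lemma).**  Let `G` be a profinite group and let
`ℰ = (α : G → Ū, f : U → Ū)` be a finite weak embedding problem for `G` with finite
abelian kernel `M = ker f`.  Choose a set-theoretic section `s` of `f`; the 2-cocycle
`ε(x,y) = s(x)·s(y)·s(xy)⁻¹` (with values in `M`, on which `Ū` acts by
`x • m = s(x)·m·s(x)⁻¹`, i.e. by lifting and conjugation) represents the cohomology class
`ε ∈ H²(Ū, M)` of the extension `1 → M → U → Ū → 1`.  Then `ℰ` has a weak solution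
(a continuous homomorphism `β : G → U` with `f∘β = α`) if and only if `α*(ε) = 0` in
`H²(G, M)`, i.e. the pulled-back 2-cocycle `(g,h) ↦ ε(α g, α h)` is the coboundary of a
continuous 1-cochain `c : G → M`. -/
theorem hoechsmann_lemma
    (G : Type*) [Group G] [TopologicalSpace G] [IsTopologicalGroup G]
    [CompactSpace G] [TotallyDisconnectedSpace G] [T2Space G]
    (U : Type*) [Group U] [Finite U] [TopologicalSpace U] [DiscreteTopology U]
    (Ubar : Type*) [Group Ubar] [Finite Ubar] [TopologicalSpace Ubar]
    [DiscreteTopology Ubar]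
    (f : U →* Ubar) (hf : Function.Surjective f)
    -- the kernel M = ker f is abelian
    (hM : ∀ x y : f.ker, x * y = y * x)
    (α : G →* Ubar) (hα : Continuous α)
    -- s is a set-theoretic section of f
    (s : Ubar → U) (hs : ∀ x : Ubar, f (s x) = x) :
    -- ℰ has a weak solution iff α*(ε) = 0 in H²(G, M)
    (∃ β : G →* U, Continuous β ∧ f.comp β = α) ↔
    (∃ c : G → U, Continuous c ∧ (∀ g : G, c g ∈ f.ker) ∧
      ∀ g h : G,
        s (α g) * s (α h) * (s (α g * α h))⁻¹
          = c g * (s (α g) * c h * (s (α g))⁻¹) * (c (g * h))⁻¹) :=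
  hoechsmann_lemma_general G U Ubar f hM α hα s hs
end

section
/- Let ℰ(G) = (α: G → Ū, f: U → Ū) be a finite weak embedding problem for a profinite group G with finite abelian kernel M = ker(f). Let φ_i: G_i → G, i ∈ I, be a family of continuous homomorphisms of profinite groups, and suppose the natural homomorphism H^2(G, M) → ∏_{i∈I} H^2(G_i, M) (induced by the φ_i) is injective. Then ℰ(G) has a weak solution if and only if for every i ∈ I the induced weak embedding problem ℰ(G_i) = (α∘φ_i: G_i → Ū, f: U → Ū) has a weak solution. -/
/-!
Fix a set-theoretic section `s` of `f`. The factor set `z(g, h) = s(α g) s(α h) s(α (g h))⁻¹`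
is a continuous `M`-valued 2-cocycle, and for a kernel-valued cochain `c` the map
`g ↦ (c g)⁻¹ s(α g)` is a homomorphism exactly when `z` is the coboundary of `c`. Hence
weak solutions of `ℰ(G)` correspond to trivialisations of the class of `z` in `H²(G, M)`,
and likewise over each `Gᵢ`, where the class is the restriction of that of `z`.
Injectivity of `H²(G, M) → ∏ᵢ H²(Gᵢ, M)` therefore turns local solutions into a global one.
-/

section FactorSet

variable {Γ Γ' U Ubar : Type*} [Group Γ] [Group Γ'] [Group U] [Group Ubar]

def factorSet (σ : Γ → U) (g h : Γ) : U := σ g * σ h * (σ (g * h))⁻¹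

theorem factorSet_eq_one_iff {σ : Γ → U} {g h : Γ} :
    factorSet σ g h = 1 ↔ σ (g * h) = σ g * σ h := by
  rw [factorSet, mul_inv_eq_one, eq_comm]

theorem factorSet_comp (σ : Γ → U) (φ : Γ' →* Γ) :
    factorSet (σ ∘ φ) = fun x y => factorSet σ (φ x) (φ y) := by
  funext x y
  simp only [factorSet, Function.comp_apply, map_mul]

theorem continuous_factorSet [TopologicalSpace Γ] [ContinuousMul Γ] [TopologicalSpace U]
    [IsTopologicalGroup U] {σ : Γ → U} (hσ : Continuous σ) :
    Continuous fun q : Γ × Γ => factorSet σ q.1 q.2 :=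
  ((hσ.comp continuous_fst).mul (hσ.comp continuous_snd)).mul
    (hσ.comp (continuous_fst.mul continuous_snd)).inv

variable {f : U →* Ubar} {ψ : Γ →* Ubar} {σ : Γ → U}

theorem factorSet_mem_ker (hσ : ∀ g, f (σ g) = ψ g) (g h : Γ) : factorSet σ g h ∈ f.ker := by
  simp [factorSet, hσ]

theorem mul_comm_of_mem_ker (hM : ∀ x y : f.ker, x * y = y * x) {u v : U} (hu : u ∈ f.ker)
    (hv : v ∈ f.ker) : u * v = v * u :=
  congrArg Subtype.val (hM ⟨u, hu⟩ ⟨v, hv⟩)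

theorem factorSet_cocycle (hM : ∀ x y : f.ker, x * y = y * x) (hσ : ∀ g, f (σ g) = ψ g)
    (g h k : Γ) :
    σ g * factorSet σ h k * (σ g)⁻¹ * factorSet σ g (h * k)
      = factorSet σ (g * h) k * factorSet σ g h := by
  rw [mul_comm_of_mem_ker hM (factorSet_mem_ker hσ _ _) (factorSet_mem_ker hσ _ _)]
  simp only [factorSet, mul_assoc, inv_mul_cancel_left]

theorem factorSet_inv_mul (hM : ∀ x y : f.ker, x * y = y * x) {c : Γ → U}
    (hc : ∀ x, c x ∈ f.ker) (x y : Γ) :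
    factorSet (fun x => (c x)⁻¹ * σ x) x y
      = (c x * (σ x * c y * (σ x)⁻¹))⁻¹ * factorSet σ x y * c (x * y) := by
  have hconj : σ x * (c y)⁻¹ * (σ x)⁻¹ ∈ f.ker :=
    f.normal_ker.conj_mem _ (f.ker.inv_mem (hc y)) _
  have hswap := mul_comm_of_mem_ker hM (f.ker.inv_mem (hc x)) hconj
  calc factorSet (fun x => (c x)⁻¹ * σ x) x y
      = (c x)⁻¹ * (σ x * (c y)⁻¹ * (σ x)⁻¹) * factorSet σ x y * c (x * y) := by
        simp only [factorSet]; group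
    _ = (σ x * (c y)⁻¹ * (σ x)⁻¹) * (c x)⁻¹ * factorSet σ x y * c (x * y) := by rw [hswap]
    _ = _ := by group

variable [TopologicalSpace Γ] [TopologicalSpace U]

variable (f) in
def IsKerCoboundary (σ : Γ → U) (z : Γ → Γ → U) : Prop :=
  ∃ c : Γ → U, Continuous c ∧ (∀ x, c x ∈ f.ker) ∧
    ∀ x y, z x y = c x * (σ x * c y * (σ x)⁻¹) * (c (x * y))⁻¹

theorem exists_lift_iff_isKerCoboundary [IsTopologicalGroup U]
    (hM : ∀ x y : f.ker, x * y = y * x) (hσ : ∀ g, f (σ g) = ψ g) (hσc : Continuous σ) :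
    (∃ β : Γ →* U, Continuous β ∧ f.comp β = ψ) ↔ IsKerCoboundary f σ (factorSet σ) := by
  constructor
  · rintro ⟨β, hβc, hβf⟩
    have hc : ∀ x, σ x * (β x)⁻¹ ∈ f.ker := fun x => by
      simp [hσ, ← DFunLike.congr_fun hβf x]
    refine ⟨fun x => σ x * (β x)⁻¹, hσc.mul hβc.inv, hc, fun x y => ?_⟩
    have hβ : factorSet (fun x => (σ x * (β x)⁻¹)⁻¹ * σ x) x y = 1 := by
      simp only [mul_inv_rev, inv_inv, inv_mul_cancel_right]
      exact factorSet_eq_one_iff.mpr (map_mul β x y)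
    rwa [factorSet_inv_mul hM hc, mul_eq_one_iff_eq_inv, inv_mul_eq_iff_eq_mul] at hβ
  · rintro ⟨c, hcc, hc, hz⟩
    have hmul : ∀ x y, (c (x * y))⁻¹ * σ (x * y) = (c x)⁻¹ * σ x * ((c y)⁻¹ * σ y) := by
      intro x y
      rw [← factorSet_eq_one_iff (σ := fun x => (c x)⁻¹ * σ x), factorSet_inv_mul hM hc, hz]
      group
    refine ⟨MonoidHom.mk' (fun x => (c x)⁻¹ * σ x) hmul, hcc.inv.mul hσc, ?_⟩
    ext x
    simp [hσ, MonoidHom.mem_ker.mp (hc x)]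

end FactorSet

theorem embedding_problem_local_global_general
    (G : Type*) [Group G] [TopologicalSpace G] [IsTopologicalGroup G]
    (U : Type*) [Group U] [TopologicalSpace U] [DiscreteTopology U]
    (Ubar : Type*) [Group Ubar] [TopologicalSpace Ubar]
    [DiscreteTopology Ubar]
    (f : U →* Ubar)
    -- the kernel M = ker f is abelian
    (hM : ∀ x y : f.ker, x * y = y * x)
    (α : G →* Ubar) (hα : Continuous α)
    -- a set-theoretic section of f, used to express the action of G on M through α
    (s : Ubar → U) (hs : ∀ x : Ubar, f (s x) = x)
    -- the family of continuous homomorphisms φᵢ : Gᵢ → G of profinite groups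
    (ι : Type*) (Gi : ι → Type*) [∀ i, Group (Gi i)] [∀ i, TopologicalSpace (Gi i)]
    (φ : ∀ i, Gi i →* G) (hφ : ∀ i, Continuous (φ i))
    -- the natural map H²(G, M) → ∏ᵢ H²(Gᵢ, M) is injective
    (hinj : ∀ z : G → G → U,
      Continuous (fun q : G × G => z q.1 q.2) →
      (∀ g h : G, z g h ∈ f.ker) →
      (∀ g h k : G,
        s (α g) * z h k * (s (α g))⁻¹ * z g (h * k) = z (g * h) k * z g h) →
      (∀ i, ∃ c : Gi i → U, Continuous c ∧ (∀ x, c x ∈ f.ker) ∧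
        ∀ x y : Gi i,
          z (φ i x) (φ i y)
            = c x * (s (α (φ i x)) * c y * (s (α (φ i x)))⁻¹) * (c (x * y))⁻¹) →
      (∃ c : G → U, Continuous c ∧ (∀ g, c g ∈ f.ker) ∧
        ∀ g h : G,
          z g h = c g * (s (α g) * c h * (s (α g))⁻¹) * (c (g * h))⁻¹)) :
    -- ℰ(G) is weakly solvable iff every ℰ(Gᵢ) is weakly solvable
    (∃ β : G →* U, Continuous β ∧ f.comp β = α) ↔
    (∀ i, ∃ β : Gi i →* U, Continuous β ∧ f.comp β = α.comp (φ i)) := by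
  constructor
  · rintro ⟨β, hβc, hβf⟩ i
    exact ⟨β.comp (φ i), hβc.comp (hφ i), by rw [← MonoidHom.comp_assoc, hβf]⟩
  · intro hloc
    have hσc : Continuous (s ∘ α) := continuous_of_discreteTopology.comp hα
    have hσ : ∀ g, f ((s ∘ α) g) = α g := fun g => hs (α g)
    refine (exists_lift_iff_isKerCoboundary hM hσ hσc).mpr
      (hinj _ (continuous_factorSet hσc) (factorSet_mem_ker hσ) (factorSet_cocycle hM hσ)
        fun i => ?_)
    have hloc_i := (exists_lift_iff_isKerCoboundary (ψ := α.comp (φ i)) (σ := s ∘ α ∘ φ i) hM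
      (fun x => hs _) (hσc.comp (hφ i))).mp (hloc i)
    rw [← Function.comp_assoc, factorSet_comp] at hloc_i
    exact hloc_i

/-- **Corollary 4.5.**  Let `ℰ(G) = (α : G → Ū, f : U → Ū)` be a finite weak embedding
problem for a profinite group `G` with finite abelian kernel `M = ker f` (on which `G`
acts through `α` by lifting and conjugation: `g • m = s(α g)·m·s(α g)⁻¹` for a
set-theoretic section `s` of `f`).  Let `φᵢ : Gᵢ → G` be a family of continuous
homomorphisms of profinite groups and assume that the natural homomorphism
`H²(G, M) → ∏ᵢ H²(Gᵢ, M)` is injective (equivalently, that its kernel is trivial: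
every continuous 2-cocycle on `G` with values in `M` whose restriction to each `Gᵢ` is a
coboundary is itself a coboundary).  Then `ℰ(G)` has a weak solution if and only if for
every `i` the induced weak embedding problem `ℰ(Gᵢ) = (α∘φᵢ, f)` has a weak solution. -/
theorem embedding_problem_local_global
    (G : Type*) [Group G] [TopologicalSpace G] [IsTopologicalGroup G]
    [CompactSpace G] [TotallyDisconnectedSpace G] [T2Space G]
    (U : Type*) [Group U] [Finite U] [TopologicalSpace U] [DiscreteTopology U]
    (Ubar : Type*) [Group Ubar] [Finite Ubar] [TopologicalSpace Ubar]
    [DiscreteTopology Ubar]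
    (f : U →* Ubar) (hf : Function.Surjective f)
    -- the kernel M = ker f is abelian
    (hM : ∀ x y : f.ker, x * y = y * x)
    (α : G →* Ubar) (hα : Continuous α)
    -- a set-theoretic section of f, used to express the action of G on M through α
    (s : Ubar → U) (hs : ∀ x : Ubar, f (s x) = x)
    -- the family of continuous homomorphisms φᵢ : Gᵢ → G of profinite groups
    (ι : Type*) (Gi : ι → Type*) [∀ i, Group (Gi i)] [∀ i, TopologicalSpace (Gi i)]
    [∀ i, IsTopologicalGroup (Gi i)] [∀ i, CompactSpace (Gi i)]
    [∀ i, TotallyDisconnectedSpace (Gi i)] [∀ i, T2Space (Gi i)]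
    (φ : ∀ i, Gi i →* G) (hφ : ∀ i, Continuous (φ i))
    -- the natural map H²(G, M) → ∏ᵢ H²(Gᵢ, M) is injective
    (hinj : ∀ z : G → G → U,
      Continuous (fun q : G × G => z q.1 q.2) →
      (∀ g h : G, z g h ∈ f.ker) →
      (∀ g h k : G,
        s (α g) * z h k * (s (α g))⁻¹ * z g (h * k) = z (g * h) k * z g h) →
      (∀ i, ∃ c : Gi i → U, Continuous c ∧ (∀ x, c x ∈ f.ker) ∧
        ∀ x y : Gi i,
          z (φ i x) (φ i y)
            = c x * (s (α (φ i x)) * c y * (s (α (φ i x)))⁻¹) * (c (x * y))⁻¹) →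
      (∃ c : G → U, Continuous c ∧ (∀ g, c g ∈ f.ker) ∧
        ∀ g h : G,
          z g h = c g * (s (α g) * c h * (s (α g))⁻¹) * (c (g * h))⁻¹)) :
    -- ℰ(G) is weakly solvable iff every ℰ(Gᵢ) is weakly solvable
    (∃ β : G →* U, Continuous β ∧ f.comp β = α) ↔
    (∀ i, ∃ β : Gi i →* U, Continuous β ∧ f.comp β = α.comp (φ i)) :=
  embedding_problem_local_global_general G U Ubar f hM α hα s hs ι Gi φ hφ hinj
end

section
/- Let p be a prime and let G be a profinite group with closed subgroups G_i, i ∈ I. Let A be the subgroup of U_4(F_p) of matrices whose off-diagonal entries vanish except possibly at positions (1,3), (1,4), (2,4), with ψ: F_p^3 → Aut(A) the action induced by conjugation. Suppose that for every continuous homomorphism α: G → F_p^3, the restriction map H^2(G, A) → ∏_{i∈I} H^2(G_i, A) is injective, where G acts on A via ψ∘α. If each G_i has the vanishing triple Massey product property with respect to F_p, then G also has the vanishing triple Massey product property with respect to F_p. -/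
open Matrix

/-!
The triple Massey product `⟨χ₁, χ₂, χ₃⟩` with defining system `(a₁₃, a₂₄)` vanishes exactly when
the `A`-valued 2-cocycle `(0, χ₁ ∪ a₂₄ + a₁₃ ∪ χ₃, 0)`, for the action of `G` on `A` through
`α = (χ₁, χ₂, χ₃)`, is a coboundary: if it is the coboundary of the cochain `(u, v, w)`, then
`(a₁₃ - u, a₂₄ - w)` is a defining system whose value is the coboundary of `v + u χ₃`; conversely a
second defining system with vanishing value differs from `(a₁₃, a₂₄)` by such a cochain. Since the
product vanishes on each `Gᵢ`, the class of this cocycle restricts to zero on every `Gᵢ`, so it is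
zero on `G` by injectivity of restriction.
-/

namespace Massey

section Matrices

variable {R : Type*} [CommRing R]

/-- `1 + a E₁₃ + b E₁₄ + c E₂₄`; Lean's matrix indices start at `0`. -/
def kerMatrix (a b c : R) : Matrix (Fin 4) (Fin 4) R :=
  1 + a • single 0 2 1 + b • single 0 3 1 + c • single 1 3 1

def liftMatrix (t : Fin 3 → R) : Matrix (Fin 4) (Fin 4) R :=
  1 + t 0 • single 0 1 1 + t 1 • single 1 2 1 + t 2 • single 2 3 1

def liftInvMatrix (t : Fin 3 → R) : Matrix (Fin 4) (Fin 4) R :=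
  1 - t 0 • single 0 1 1 - t 1 • single 1 2 1 - t 2 • single 2 3 1
    + (t 0 * t 1) • single 0 2 1 + (t 1 * t 2) • single 1 3 1
    - (t 0 * t 1 * t 2) • single 0 3 1

theorem kerMatrix_mul (a b c a' b' c' : R) :
    kerMatrix a b c * kerMatrix a' b' c' = kerMatrix (a + a') (b + b') (c + c') := by
  ext i j
  fin_cases i <;> fin_cases j <;>
    simp [kerMatrix, mul_apply, Fin.sum_univ_four, single, one_apply] <;> ring

@[simp]
theorem kerMatrix_zero : kerMatrix (0 : R) 0 0 = 1 := by simp [kerMatrix]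

@[simp]
theorem kerMatrix_apply_zero_two (a b c : R) : kerMatrix a b c 0 2 = a := by
  simp [kerMatrix, single, one_apply]

@[simp]
theorem kerMatrix_apply_zero_three (a b c : R) : kerMatrix a b c 0 3 = b := by
  simp [kerMatrix, single, one_apply]

@[simp]
theorem kerMatrix_apply_one_three (a b c : R) : kerMatrix a b c 1 3 = c := by
  simp [kerMatrix, single, one_apply]

theorem liftMatrix_mul_liftInvMatrix (t : Fin 3 → R) : liftMatrix t * liftInvMatrix t = 1 := by
  ext i j
  fin_cases i <;> fin_cases j <;>
    simp [liftMatrix, liftInvMatrix, mul_apply, Fin.sum_univ_four, single, one_apply]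
  ring

theorem liftInvMatrix_mul_liftMatrix (t : Fin 3 → R) : liftInvMatrix t * liftMatrix t = 1 := by
  ext i j
  fin_cases i <;> fin_cases j <;>
    simp [liftMatrix, liftInvMatrix, mul_apply, Fin.sum_univ_four, single, one_apply]

theorem liftMatrix_mul_kerMatrix_mul_liftInvMatrix (t : Fin 3 → R) (a b c : R) :
    liftMatrix t * kerMatrix a b c * liftInvMatrix t = kerMatrix a (b + t 0 * c - t 2 * a) c := by
  ext i j
  fin_cases i <;> fin_cases j <;>
    simp [liftMatrix, liftInvMatrix, kerMatrix, mul_apply, Fin.sum_univ_four, single,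
      one_apply]
  ring

theorem isUpperUnitriangular_liftMatrix {p : ℕ} (t : Fin 3 → ZMod p) :
    IsUpperUnitriangular (liftMatrix t) := by
  constructor
  · intro i j hji
    fin_cases i <;> fin_cases j <;> simp_all [liftMatrix, single]
  · intro i
    fin_cases i <;> simp [liftMatrix, single]

theorem liftMatrix_apply_castSucc_succ (t : Fin 3 → R) (i : Fin 3) :
    liftMatrix t i.castSucc i.succ = t i := by
  fin_cases i <;> simp [liftMatrix, single]

def kerUnit (a b c : R) : GL (Fin 4) R :=
  ⟨kerMatrix a b c, kerMatrix (-a) (-b) (-c), by simp [kerMatrix_mul], by simp [kerMatrix_mul]⟩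

def liftUnit (t : Fin 3 → R) : GL (Fin 4) R :=
  ⟨liftMatrix t, liftInvMatrix t, liftMatrix_mul_liftInvMatrix t, liftInvMatrix_mul_liftMatrix t⟩

theorem kerUnit_mul (a b c a' b' c' : R) :
    kerUnit a b c * kerUnit a' b' c' = kerUnit (a + a') (b + b') (c + c') :=
  Units.ext (kerMatrix_mul a b c a' b' c')

theorem kerUnit_inv (a b c : R) : (kerUnit a b c)⁻¹ = kerUnit (-a) (-b) (-c) :=
  Units.ext rfl

theorem liftUnit_mul_kerUnit_mul_inv (t : Fin 3 → R) (a b c : R) :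
    liftUnit t * kerUnit a b c * (liftUnit t)⁻¹ = kerUnit a (b + t 0 * c - t 2 * a) c :=
  Units.ext (liftMatrix_mul_kerMatrix_mul_liftInvMatrix t a b c)

theorem kerUnit_inj {a b c a' b' c' : R} :
    kerUnit a b c = kerUnit a' b' c' ↔ a = a' ∧ b = b' ∧ c = c' := by
  refine ⟨fun h => ?_, fun ⟨ha, hb, hc⟩ => ha ▸ hb ▸ hc ▸ rfl⟩
  have h' : kerMatrix a b c = kerMatrix a' b' c' := congrArg Units.val h
  exact ⟨by simpa using congrFun₂ h' 0 2, by simpa using congrFun₂ h' 0 3,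
    by simpa using congrFun₂ h' 1 3⟩

theorem eq_kerUnit_entries {g : GL (Fin 4) R}
    (hg : ∃ a b c, (g : Matrix (Fin 4) (Fin 4) R) = kerMatrix a b c) :
    g = kerUnit ((g : Matrix (Fin 4) (Fin 4) R) 0 2) ((g : Matrix (Fin 4) (Fin 4) R) 0 3)
      ((g : Matrix (Fin 4) (Fin 4) R) 1 3) := by
  obtain ⟨a, b, c, h⟩ := hg
  exact Units.ext (by simp [h, kerUnit])

theorem continuous_kerUnit [TopologicalSpace R] [IsTopologicalRing R] {X : Type*}
    [TopologicalSpace X] {u v w : X → R} (hu : Continuous u) (hv : Continuous v)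
    (hw : Continuous w) : Continuous fun x => kerUnit (u x) (v x) (w x) := by
  refine Units.continuous_iff.2 ⟨?_, ?_⟩ <;>
  · simp only [kerUnit, kerMatrix]
    fun_prop

theorem kerUnit_eq_coboundary_iff (t : Fin 3 → R) (f u v w u' v' w' u'' v'' w'' : R) :
    kerUnit 0 f 0 = kerUnit u v w * (liftUnit t * kerUnit u' v' w' * (liftUnit t)⁻¹) *
        (kerUnit u'' v'' w'')⁻¹ ↔
      u + u' = u'' ∧ f + v'' = v + v' + t 0 * w' - t 2 * u' ∧ w + w' = w'' := by
  rw [liftUnit_mul_kerUnit_mul_inv, kerUnit_inv, kerUnit_mul, kerUnit_mul, kerUnit_inj]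
  constructor <;> rintro ⟨h₁, h₂, h₃⟩ <;>
    exact ⟨by linear_combination -h₁, by linear_combination h₂, by linear_combination -h₃⟩

theorem liftUnit_mul_kerUnit_mul_inv_mul_kerUnit (t : Fin 3 → R) {b b' b'' b''' : R}
    (h : b + b' = b'' + b''') :
    liftUnit t * kerUnit 0 b 0 * (liftUnit t)⁻¹ * kerUnit 0 b' 0 =
      kerUnit 0 b'' 0 * kerUnit 0 b''' 0 := by
  rw [liftUnit_mul_kerUnit_mul_inv, kerUnit_mul, kerUnit_mul, kerUnit_inj]
  exact ⟨rfl, by linear_combination h, rfl⟩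

end Matrices

section Cochains

variable {G R : Type*}

def IsContinuousHom [Mul G] [Add R] [TopologicalSpace G] [TopologicalSpace R] (χ : G → R) :
    Prop :=
  Continuous χ ∧ ∀ g h, χ (g * h) = χ g + χ h

theorem IsContinuousHom.comp {H : Type*} [Mul H] [Mul G] [Add R]
    [TopologicalSpace H] [TopologicalSpace G] [TopologicalSpace R] {χ : G → R}
    (hχ : IsContinuousHom χ) (φ : H →ₙ* G) (hφ : Continuous φ) : IsContinuousHom (χ ∘ φ) :=
  ⟨hχ.1.comp hφ, fun g h => by simp only [Function.comp_apply, map_mul, hχ.2]⟩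

theorem IsContinuousHom.vec3 [Mul G] [Add R] [TopologicalSpace G] [TopologicalSpace R]
    {χ₁ χ₂ χ₃ : G → R} (h₁ : IsContinuousHom χ₁) (h₂ : IsContinuousHom χ₂)
    (h₃ : IsContinuousHom χ₃) : IsContinuousHom fun g => ![χ₁ g, χ₂ g, χ₃ g] := by
  refine ⟨continuous_pi fun i => ?_, fun g h => ?_⟩
  · fin_cases i
    exacts [h₁.1, h₂.1, h₃.1]
  · ext i
    fin_cases i <;> simp [h₁.2, h₂.2, h₃.2]

variable [CommRing R]

def masseyValue (χ₁ χ₃ a₁₃ a₂₄ : G → R) (g h : G) : R := χ₁ g * a₂₄ h + a₁₃ g * χ₃ h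

theorem continuous_masseyValue [TopologicalSpace G] [TopologicalSpace R] [IsTopologicalRing R]
    {χ₁ χ₃ a₁₃ a₂₄ : G → R} (hχ₁ : Continuous χ₁) (hχ₃ : Continuous χ₃) (ha₁₃ : Continuous a₁₃)
    (ha₂₄ : Continuous a₂₄) :
    Continuous fun q : G × G => masseyValue χ₁ χ₃ a₁₃ a₂₄ q.1 q.2 := by
  unfold masseyValue
  fun_prop

variable [Mul G]

def IsDefiningSystem (χ₁ χ₂ χ₃ a₁₃ a₂₄ : G → R) : Prop :=
  (∀ g h, a₁₃ h - a₁₃ (g * h) + a₁₃ g = χ₁ g * χ₂ h) ∧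
    ∀ g h, a₂₄ h - a₂₄ (g * h) + a₂₄ g = χ₂ g * χ₃ h

theorem IsDefiningSystem.comp {H : Type*} [Mul H] {χ₁ χ₂ χ₃ a₁₃ a₂₄ : G → R}
    (hsys : IsDefiningSystem χ₁ χ₂ χ₃ a₁₃ a₂₄) (φ : H →ₙ* G) :
    IsDefiningSystem (χ₁ ∘ φ) (χ₂ ∘ φ) (χ₃ ∘ φ) (a₁₃ ∘ φ) (a₂₄ ∘ φ) := by
  refine ⟨fun g h => ?_, fun g h => ?_⟩ <;> simp only [Function.comp_apply, map_mul]
  exacts [hsys.1 _ _, hsys.2 _ _]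

/-- `(0, f, 0)` is the coboundary of the 1-cochain `g ↦ kerMatrix (u g) (v g) (w g)` for the
action of `G` through `χ₁` and `χ₃`; see `kerUnit_eq_coboundary_iff`. -/
def IsTwistedCoboundary (χ₁ χ₃ : G → R) (f : G → G → R) (u v w : G → R) : Prop :=
  ∀ g h, u g + u h = u (g * h) ∧ f g h + v (g * h) = v g + v h + χ₁ g * w h - χ₃ g * u h ∧
    w g + w h = w (g * h)

variable {χ₁ χ₂ χ₃ a₁₃ a₂₄ : G → R}

theorem IsDefiningSystem.masseyValue_cocycle (hsys : IsDefiningSystem χ₁ χ₂ χ₃ a₁₃ a₂₄)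
    (hχ₁ : ∀ g h, χ₁ (g * h) = χ₁ g + χ₁ h) (hχ₃ : ∀ g h, χ₃ (g * h) = χ₃ g + χ₃ h)
    (g h k : G) :
    masseyValue χ₁ χ₃ a₁₃ a₂₄ h k + masseyValue χ₁ χ₃ a₁₃ a₂₄ g (h * k) =
      masseyValue χ₁ χ₃ a₁₃ a₂₄ (g * h) k + masseyValue χ₁ χ₃ a₁₃ a₂₄ g h := by
  simp only [masseyValue]
  linear_combination -χ₁ g * hsys.2 h k + χ₃ k * hsys.1 g h - a₂₄ k * hχ₁ g h +
    a₁₃ g * hχ₃ h k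

theorem IsDefiningSystem.isTwistedCoboundary (hsys : IsDefiningSystem χ₁ χ₂ χ₃ a₁₃ a₂₄)
    (hχ₃ : ∀ g h, χ₃ (g * h) = χ₃ g + χ₃ h) {b₁₃ b₂₄ c : G → R}
    (hsys' : IsDefiningSystem χ₁ χ₂ χ₃ b₁₃ b₂₄)
    (hc : ∀ g h, masseyValue χ₁ χ₃ b₁₃ b₂₄ g h = c h - c (g * h) + c g) :
    IsTwistedCoboundary χ₁ χ₃ (masseyValue χ₁ χ₃ a₁₃ a₂₄) (a₁₃ - b₁₃)
      (c + (b₁₃ - a₁₃) * χ₃) (a₂₄ - b₂₄) := by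
  intro g h
  simp only [masseyValue, Pi.add_apply, Pi.sub_apply, Pi.mul_apply] at hc ⊢
  refine ⟨?_, ?_, ?_⟩
  · linear_combination hsys.1 g h - hsys'.1 g h
  · linear_combination hc g h - χ₃ (g * h) * hsys'.1 g h + χ₃ (g * h) * hsys.1 g h +
      (b₁₃ g - a₁₃ g + b₁₃ h - a₁₃ h) * hχ₃ g h
  · linear_combination hsys.2 g h - hsys'.2 g h

theorem IsDefiningSystem.sub_of_isTwistedCoboundary (hsys : IsDefiningSystem χ₁ χ₂ χ₃ a₁₃ a₂₄)
    (hχ₃ : ∀ g h, χ₃ (g * h) = χ₃ g + χ₃ h) {u v w : G → R}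
    (huvw : IsTwistedCoboundary χ₁ χ₃ (masseyValue χ₁ χ₃ a₁₃ a₂₄) u v w) :
    IsDefiningSystem χ₁ χ₂ χ₃ (a₁₃ - u) (a₂₄ - w) ∧ ∀ g h,
      masseyValue χ₁ χ₃ (a₁₃ - u) (a₂₄ - w) g h = (v + u * χ₃) h - (v + u * χ₃) (g * h) +
        (v + u * χ₃) g := by
  refine ⟨⟨fun g h => ?_, fun g h => ?_⟩, fun g h => ?_⟩ <;>
    obtain ⟨hu, hv, hw⟩ := huvw g h <;>
    simp only [masseyValue, Pi.add_apply, Pi.sub_apply, Pi.mul_apply] at hv ⊢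
  · linear_combination hsys.1 g h - hu
  · linear_combination hsys.2 g h - hw
  · linear_combination hv - χ₃ (g * h) * hu + (u g + u h) * hχ₃ g h

end Cochains

section CochainsInGL

variable {H R : Type*} [Mul H] [TopologicalSpace H] [CommRing R] [TopologicalSpace R]
  {t : H → Fin 3 → R} {f : H → H → R}

theorem IsTwistedCoboundary.exists_kerUnit [IsTopologicalRing R] {u v w : H → R}
    (hu : Continuous u) (hv : Continuous v) (hw : Continuous w)
    (huvw : IsTwistedCoboundary (fun g => t g 0) (fun g => t g 2) f u v w) :
    ∃ c : H → GL (Fin 4) R, Continuous c ∧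
      (∀ x, ∃ a b c', (c x : Matrix (Fin 4) (Fin 4) R) = kerMatrix a b c') ∧
      ∀ x y,
        kerUnit 0 (f x y) 0 = c x * (liftUnit (t x) * c y * (liftUnit (t x))⁻¹) * (c (x * y))⁻¹ :=
  ⟨fun x => kerUnit (u x) (v x) (w x), continuous_kerUnit hu hv hw, fun _ => ⟨_, _, _, rfl⟩,
    fun x y => (kerUnit_eq_coboundary_iff _ _ _ _ _ _ _ _ _ _ _).2 (huvw x y)⟩

theorem exists_isTwistedCoboundary_of_kerUnit_eq {c : H → GL (Fin 4) R} (hc : Continuous c)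
    (hcA : ∀ x, ∃ a b c', (c x : Matrix (Fin 4) (Fin 4) R) = kerMatrix a b c')
    (hcf : ∀ x y,
      kerUnit 0 (f x y) 0 = c x * (liftUnit (t x) * c y * (liftUnit (t x))⁻¹) * (c (x * y))⁻¹) :
    ∃ u v w : H → R, Continuous u ∧ Continuous v ∧ Continuous w ∧
      IsTwistedCoboundary (fun g => t g 0) (fun g => t g 2) f u v w := by
  let e (i j : Fin 4) (x : H) : R := (c x : Matrix (Fin 4) (Fin 4) R) i j
  have he (i j : Fin 4) : Continuous (e i j) := (Units.continuous_val.comp hc).matrix_elem i j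
  have hce (x : H) : c x = kerUnit (e 0 2 x) (e 0 3 x) (e 1 3 x) := eq_kerUnit_entries (hcA x)
  refine ⟨e 0 2, e 0 3, e 1 3, he 0 2, he 0 3, he 1 3, fun x y => ?_⟩
  have hxy := hcf x y
  rw [hce x, hce y, hce (x * y)] at hxy
  exact (kerUnit_eq_coboundary_iff _ _ _ _ _ _ _ _ _ _ _).1 hxy

end CochainsInGL

section Vanishing

variable {G : Type*} [Group G] [TopologicalSpace G] {p : ℕ}

theorem HasVanishingTripleMasseyProduct.exists_isTwistedCoboundary
    (hG : HasVanishingTripleMasseyProduct G p) {χ₁ χ₂ χ₃ a₁₃ a₂₄ : G → ZMod p}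
    (hχ₁ : IsContinuousHom χ₁) (hχ₂ : IsContinuousHom χ₂) (hχ₃ : IsContinuousHom χ₃)
    (ha₁₃ : Continuous a₁₃) (ha₂₄ : Continuous a₂₄) (hsys : IsDefiningSystem χ₁ χ₂ χ₃ a₁₃ a₂₄) :
    ∃ u v w : G → ZMod p, Continuous u ∧ Continuous v ∧ Continuous w ∧
      IsTwistedCoboundary χ₁ χ₃ (masseyValue χ₁ χ₃ a₁₃ a₂₄) u v w := by
  obtain ⟨b₁₃, b₂₄, c, hb₁₃, hb₂₄, hc, hsys₁, hsys₂, hval⟩ :=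
    hG χ₁ χ₂ χ₃ hχ₁ hχ₂ hχ₃ ⟨a₁₃, a₂₄, ha₁₃, ha₂₄, hsys⟩
  exact ⟨_, _, _, ha₁₃.sub hb₁₃, hc.add ((hb₁₃.sub ha₁₃).mul hχ₃.1), ha₂₄.sub hb₂₄,
    hsys.isTwistedCoboundary hχ₃.2 ⟨hsys₁, hsys₂⟩ hval⟩

theorem hasVanishingTripleMasseyProduct_of_isTwistedCoboundary
    (h : ∀ χ₁ χ₂ χ₃ a₁₃ a₂₄ : G → ZMod p, IsContinuousHom χ₁ → IsContinuousHom χ₂ →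
      IsContinuousHom χ₃ → Continuous a₁₃ → Continuous a₂₄ → IsDefiningSystem χ₁ χ₂ χ₃ a₁₃ a₂₄ →
      ∃ u v w : G → ZMod p, Continuous u ∧ Continuous v ∧ Continuous w ∧
        IsTwistedCoboundary χ₁ χ₃ (masseyValue χ₁ χ₃ a₁₃ a₂₄) u v w) :
    HasVanishingTripleMasseyProduct G p := by
  rintro χ₁ χ₂ χ₃ hχ₁ hχ₂ hχ₃ ⟨a₁₃, a₂₄, ha₁₃, ha₂₄, hsys⟩
  obtain ⟨u, v, w, hu, hv, hw, huvw⟩ := h χ₁ χ₂ χ₃ a₁₃ a₂₄ hχ₁ hχ₂ hχ₃ ha₁₃ ha₂₄ hsys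
  obtain ⟨⟨hsys₁, hsys₂⟩, hval⟩ := IsDefiningSystem.sub_of_isTwistedCoboundary hsys hχ₃.2 huvw
  exact ⟨a₁₃ - u, a₂₄ - w, v + u * χ₃, ha₁₃.sub hu, ha₂₄.sub hw, hv.add (hu.mul hχ₃.1),
    hsys₁, hsys₂, hval⟩

end Vanishing

end Massey

open Massey

theorem vanishing_triple_massey_local_global_general
    (p : ℕ)
    (G : Type*) [Group G] [TopologicalSpace G]
    (U4 : Subgroup (Matrix.GeneralLinearGroup (Fin 4) (ZMod p)))
    (hU4 : ∀ g : Matrix.GeneralLinearGroup (Fin 4) (ZMod p),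
      g ∈ U4 ↔ IsUpperUnitriangular (g : Matrix (Fin 4) (Fin 4) (ZMod p)))
    (A : Subgroup (Matrix.GeneralLinearGroup (Fin 4) (ZMod p)))
    (hA : ∀ g : Matrix.GeneralLinearGroup (Fin 4) (ZMod p), g ∈ A ↔ ∃ a b c : ZMod p,
      (g : Matrix (Fin 4) (Fin 4) (ZMod p))
        = 1 + a • Matrix.single 0 2 (1 : ZMod p)
          + b • Matrix.single 0 3 (1 : ZMod p)
          + c • Matrix.single 1 3 (1 : ZMod p))
    -- the closed subgroups Gᵢ of G
    (I : Type*) (Gi : I → Subgroup G)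
    -- for every continuous α : G → F_p³, restriction H²(G,A) → ∏ᵢ H²(Gᵢ,A) is injective,
    -- where the action of G on A is ψ∘α (conjugation by unitriangular lifts s(α g))
    (hinj : ∀ α : G → (Fin 3 → ZMod p), Continuous α →
      (∀ g h : G, α (g * h) = α g + α h) →
      ∀ s : (Fin 3 → ZMod p) → Matrix.GeneralLinearGroup (Fin 4) (ZMod p),
      (∀ t, s t ∈ U4 ∧ ∀ i : Fin 3,
        ((s t : Matrix.GeneralLinearGroup (Fin 4) (ZMod p)) :
          Matrix (Fin 4) (Fin 4) (ZMod p)) i.castSucc i.succ = t i) →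
      ∀ z : G → G → Matrix.GeneralLinearGroup (Fin 4) (ZMod p),
        Continuous (fun q : G × G => z q.1 q.2) →
        (∀ g h : G, z g h ∈ A) →
        (∀ g h k : G,
          s (α g) * z h k * (s (α g))⁻¹ * z g (h * k) = z (g * h) k * z g h) →
        (∀ i, ∃ c : Gi i → Matrix.GeneralLinearGroup (Fin 4) (ZMod p),
          Continuous c ∧ (∀ x, c x ∈ A) ∧
          ∀ x y : Gi i,
            z (x : G) (y : G)
              = c x * (s (α (x : G)) * c y * (s (α (x : G)))⁻¹) * (c (x * y))⁻¹) →
        (∃ c : G → Matrix.GeneralLinearGroup (Fin 4) (ZMod p),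
          Continuous c ∧ (∀ g, c g ∈ A) ∧
          ∀ g h : G,
            z g h = c g * (s (α g) * c h * (s (α g))⁻¹) * (c (g * h))⁻¹))
    -- if each Gᵢ has the vanishing triple Massey product property
    (hloc : ∀ i, HasVanishingTripleMasseyProduct (Gi i) p) :
    -- then so does G
    HasVanishingTripleMasseyProduct G p := by
  refine hasVanishingTripleMasseyProduct_of_isTwistedCoboundary
    fun χ₁ χ₂ χ₃ a₁₃ a₂₄ hχ₁ hχ₂ hχ₃ ha₁₃ ha₂₄ hsys => ?_
  let α (g : G) : Fin 3 → ZMod p := ![χ₁ g, χ₂ g, χ₃ g]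
  obtain ⟨hα, hα_mul⟩ : IsContinuousHom α := hχ₁.vec3 hχ₂ hχ₃
  have hlift (t : Fin 3 → ZMod p) : liftUnit t ∈ U4 ∧ ∀ i : Fin 3,
      (liftUnit t : Matrix (Fin 4) (Fin 4) (ZMod p)) i.castSucc i.succ = t i :=
    ⟨(hU4 _).2 (isUpperUnitriangular_liftMatrix t), liftMatrix_apply_castSucc_succ t⟩
  obtain ⟨c, hc, hcA, hcz⟩ := hinj α hα hα_mul liftUnit hlift
    (fun g h => kerUnit 0 (masseyValue χ₁ χ₃ a₁₃ a₂₄ g h) 0)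
    (continuous_kerUnit continuous_const (continuous_masseyValue hχ₁.1 hχ₃.1 ha₁₃ ha₂₄)
      continuous_const)
    (fun g h => (hA _).2 ⟨_, _, _, rfl⟩)
    (fun g h k => liftUnit_mul_kerUnit_mul_inv_mul_kerUnit _
      (hsys.masseyValue_cocycle hχ₁.2 hχ₃.2 g h k))
    (fun i => by
      let ι := (Gi i).subtype.toMulHom
      obtain ⟨u, v, w, hu, hv, hw, huvw⟩ := (hloc i).exists_isTwistedCoboundary
        (hχ₁.comp ι continuous_subtype_val) (hχ₂.comp ι continuous_subtype_val)
        (hχ₃.comp ι continuous_subtype_val) (ha₁₃.comp continuous_subtype_val)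
        (ha₂₄.comp continuous_subtype_val) (hsys.comp ι)
      obtain ⟨c, hc, hcA, hcz⟩ :=
        IsTwistedCoboundary.exists_kerUnit (t := fun x : Gi i => α x) hu hv hw huvw
      exact ⟨c, hc, fun x => (hA _).2 (hcA x), hcz⟩)
  exact exists_isTwistedCoboundary_of_kerUnit_eq hc (fun g => (hA _).1 (hcA g)) hcz

/-- **Proposition 4.6.**  Let `G` be a profinite group with closed subgroups `Gᵢ`, `i ∈ I`,
and let `A ≤ U₄(F_p)` be the abelian kernel of `U₄(F_p) → F_p³`, on which `F_p³` acts by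
`ψ` (induced by conjugation).  Suppose that for every continuous homomorphism
`α : G → F_p³` the restriction map `H²(G, A) → ∏ᵢ H²(Gᵢ, A)` is injective (equivalently,
has trivial kernel: every continuous 2-cocycle with values in `A`, for the action `ψ∘α`,
whose restriction to each `Gᵢ` is a coboundary is itself a coboundary; the action `ψ∘α` is
expressed by conjugating by a lift `s(α g) ∈ U₄(F_p)` of `α g`).  If each `Gᵢ` has the
vanishing triple Massey product property with respect to `F_p`, then so does `G`. -/
theorem vanishing_triple_massey_local_global
    (p : ℕ) [Fact p.Prime]
    (G : Type*) [Group G] [TopologicalSpace G] [IsTopologicalGroup G]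
    [CompactSpace G] [TotallyDisconnectedSpace G] [T2Space G]
    (U4 : Subgroup (Matrix.GeneralLinearGroup (Fin 4) (ZMod p)))
    (hU4 : ∀ g : Matrix.GeneralLinearGroup (Fin 4) (ZMod p),
      g ∈ U4 ↔ IsUpperUnitriangular (g : Matrix (Fin 4) (Fin 4) (ZMod p)))
    (A : Subgroup (Matrix.GeneralLinearGroup (Fin 4) (ZMod p)))
    (hA : ∀ g : Matrix.GeneralLinearGroup (Fin 4) (ZMod p), g ∈ A ↔ ∃ a b c : ZMod p,
      (g : Matrix (Fin 4) (Fin 4) (ZMod p))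
        = 1 + a • Matrix.single 0 2 (1 : ZMod p)
          + b • Matrix.single 0 3 (1 : ZMod p)
          + c • Matrix.single 1 3 (1 : ZMod p))
    -- the closed subgroups Gᵢ of G
    (I : Type*) (Gi : I → Subgroup G) (hGi : ∀ i, IsClosed (Gi i : Set G))
    -- for every continuous α : G → F_p³, restriction H²(G,A) → ∏ᵢ H²(Gᵢ,A) is injective,
    -- where the action of G on A is ψ∘α (conjugation by unitriangular lifts s(α g))
    (hinj : ∀ α : G → (Fin 3 → ZMod p), Continuous α →
      (∀ g h : G, α (g * h) = α g + α h) →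
      ∀ s : (Fin 3 → ZMod p) → Matrix.GeneralLinearGroup (Fin 4) (ZMod p),
      (∀ t, s t ∈ U4 ∧ ∀ i : Fin 3,
        ((s t : Matrix.GeneralLinearGroup (Fin 4) (ZMod p)) :
          Matrix (Fin 4) (Fin 4) (ZMod p)) i.castSucc i.succ = t i) →
      ∀ z : G → G → Matrix.GeneralLinearGroup (Fin 4) (ZMod p),
        Continuous (fun q : G × G => z q.1 q.2) →
        (∀ g h : G, z g h ∈ A) →
        (∀ g h k : G,
          s (α g) * z h k * (s (α g))⁻¹ * z g (h * k) = z (g * h) k * z g h) →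
        (∀ i, ∃ c : Gi i → Matrix.GeneralLinearGroup (Fin 4) (ZMod p),
          Continuous c ∧ (∀ x, c x ∈ A) ∧
          ∀ x y : Gi i,
            z (x : G) (y : G)
              = c x * (s (α (x : G)) * c y * (s (α (x : G)))⁻¹) * (c (x * y))⁻¹) →
        (∃ c : G → Matrix.GeneralLinearGroup (Fin 4) (ZMod p),
          Continuous c ∧ (∀ g, c g ∈ A) ∧
          ∀ g h : G,
            z g h = c g * (s (α g) * c h * (s (α g))⁻¹) * (c (g * h))⁻¹))
    -- if each Gᵢ has the vanishing triple Massey product property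
    (hloc : ∀ i, HasVanishingTripleMasseyProduct (Gi i) p) :
    -- then so does G
    HasVanishingTripleMasseyProduct G p :=
  vanishing_triple_massey_local_global_general p G U4 hU4 A hA I Gi hinj hloc
end
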